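/- arXiv:2410.03744 — 11 statements merged into one kernel-verified Lean document; each statement's English description precedes it below -/
import Mathlib

section
/- (Every algebraic curve has a three-pole oval description) Let P ∈ ℝ[X,Y] be a real polynomial in two variables and let a, b, c ∈ ℂ be three points that are not collinear. Then there exists a real polynomial f ∈ ℝ[X,Y,Z] in three variables such that for every z ∈ ℂ, f(|z−a|², |z−b|², |z−c|²) = P(Re z, Im z). In particular, the algebraic curve {z ∈ ℂ : P(Re z, Im z) = 0} coincides with the oval {z ∈ ℂ : f(|z−a|², |z−b|², |z−c|²) = 0}. -/
/-!
Expanding `‖z - p‖² = ‖z‖² - 2⟪z, p⟫ + ‖p‖²` shows that the difference of the squared distances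
to two poles `p, q` is `2⟪z, p - q⟫` plus a constant. Hence `z ↦ ⟪z, u⟫` is a polynomial in the
squared distances for every `u` in the span of the differences of the poles. For three
non-collinear poles in `ℂ` these differences span the plane, so `Re z = ⟪z, 1⟫` and `Im z = ⟪z, I⟫`,
and with them every polynomial in `Re z, Im z`, are polynomials in the squared distances.
-/

open Matrix Complex
open MvPolynomial
open scoped InnerProductSpace

theorem MvPolynomial.aeval_pi_apply {R X σ : Type*} [CommSemiring R] (g : σ → X → R)
    (f : MvPolynomial σ R) (x : X) : aeval g f x = eval (fun i => g i x) f := by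
  change Pi.evalAlgHom R (fun _ : X => R) x (aeval g f) = _
  rw [← AlgHom.comp_apply, comp_aeval]
  rfl

theorem vectorSpan_eq_top_of_not_collinear {k V P : Type*} [DivisionRing k] [AddCommGroup V]
    [Module k V] [AddTorsor V P] [FiniteDimensional k V] (hV : Module.finrank k V = 2)
    {a b c : P} (h : ¬ Collinear k ({a, b, c} : Set P)) :
    vectorSpan k (Set.range ![a, b, c]) = ⊤ := by
  apply AffineSubspace.vectorSpan_eq_top_of_affineSpan_eq_top
  rw [(affineIndependent_iff_not_collinear_set.2 h).affineSpan_eq_top_iff_card_eq_finrank_add_one,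
    hV]
  rfl

section SquaredDistPolynomials

variable {E ι : Type*} [NormedAddCommGroup E] [InnerProductSpace ℝ E]

noncomputable def squaredDistPolynomials (p : ι → E) : Subalgebra ℝ (E → ℝ) :=
  (aeval fun i z => ‖z - p i‖ ^ 2).range

theorem inner_sub_mem_squaredDistPolynomials (p : ι → E) (i j : ι) :
    (fun z => ⟪z, p i - p j⟫_ℝ) ∈ squaredDistPolynomials p := by
  have hdist (k : ι) : (fun z : E => ‖z - p k‖ ^ 2) ∈ squaredDistPolynomials p :=
    ⟨X k, aeval_X _ k⟩
  have hpolar : (fun z => ⟪z, p i - p j⟫_ℝ) = (2⁻¹ : ℝ) • ((fun z => ‖z - p j‖ ^ 2) -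
      (fun z => ‖z - p i‖ ^ 2) + algebraMap ℝ (E → ℝ) (‖p i‖ ^ 2 - ‖p j‖ ^ 2)) := by
    ext z
    simp only [Pi.smul_apply, Pi.add_apply, Pi.sub_apply, Pi.algebraMap_apply,
      Algebra.algebraMap_self, RingHom.id_apply, smul_eq_mul, norm_sub_sq_real, inner_sub_right]
    ring
  rw [hpolar]
  exact Subalgebra.smul_mem _
    (add_mem (sub_mem (hdist j) (hdist i)) (Subalgebra.algebraMap_mem _ _)) _

theorem inner_mem_squaredDistPolynomials {p : ι → E} {u : E}
    (hu : u ∈ vectorSpan ℝ (Set.range p)) :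
    (fun z => ⟪z, u⟫_ℝ) ∈ squaredDistPolynomials p := by
  rw [vectorSpan_def] at hu
  induction hu using Submodule.span_induction with
  | mem u hu =>
    obtain ⟨_, ⟨i, rfl⟩, _, ⟨j, rfl⟩, rfl⟩ := Set.mem_vsub.1 hu
    exact inner_sub_mem_squaredDistPolynomials p i j
  | zero =>
    simp only [inner_zero_right]
    exact zero_mem _
  | add u v _ _ hu hv =>
    simp only [inner_add_right]
    exact add_mem hu hv
  | smul r u _ hu =>
    simp only [real_inner_smul_right]
    exact Subalgebra.smul_mem _ hu r

end SquaredDistPolynomials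

theorem aeval_re_im_mem_squaredDistPolynomials {a b c : ℂ}
    (h : ¬ Collinear ℝ ({a, b, c} : Set ℂ)) (P : MvPolynomial (Fin 2) ℝ) :
    aeval ![re, im] P ∈ squaredDistPolynomials ![a, b, c] := by
  have hspan := vectorSpan_eq_top_of_not_collinear finrank_real_complex h
  have hinner (u : ℂ) : (fun z => ⟪z, u⟫_ℝ) ∈ squaredDistPolynomials ![a, b, c] :=
    inner_mem_squaredDistPolynomials (by rw [hspan]; exact Submodule.mem_top)
  have hre : re = fun z => ⟪z, 1⟫_ℝ := by ext z; simp [Complex.inner]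
  have him : im = fun z => ⟪z, I⟫_ℝ := by ext z; simp [Complex.inner]
  have hle : (aeval ![re, im]).range ≤ squaredDistPolynomials ![a, b, c] := by
    rw [aeval_range, Algebra.adjoin_le_iff, Set.range_subset_iff, Fin.forall_fin_two]
    constructor
    · rw [Matrix.cons_val_zero, hre]
      exact hinner _
    · rw [Matrix.cons_val_one, him]
      exact hinner _
  exact hle (AlgHom.mem_range_self _ P)

/-- Every algebraic curve has a three-pole oval description: given a real polynomial `P` in two
variables and three non-collinear poles `a, b, c`, there is a real polynomial `f` in three
variables with `f(|z−a|², |z−b|², |z−c|²) = P(Re z, Im z)` for all `z`; in particular the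
algebraic curve `P(Re z, Im z) = 0` coincides with the oval `f(r(a)², r(b)², r(c)²) = 0`. -/
theorem algebraic_curve_three_pole_oval (P : MvPolynomial (Fin 2) ℝ) (a b c : ℂ)
    (h : ¬ Collinear ℝ ({a, b, c} : Set ℂ)) :
    ∃ f : MvPolynomial (Fin 3) ℝ,
      (∀ z : ℂ,
        MvPolynomial.eval
            ![‖z - a‖ ^ 2, ‖z - b‖ ^ 2, ‖z - c‖ ^ 2] f =
          MvPolynomial.eval ![z.re, z.im] P) ∧
      {z : ℂ |
          MvPolynomial.eval
            ![‖z - a‖ ^ 2, ‖z - b‖ ^ 2, ‖z - c‖ ^ 2] f = 0} =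
        {z : ℂ | MvPolynomial.eval ![z.re, z.im] P = 0} := by
  obtain ⟨f, hf⟩ := (AlgHom.mem_range _).1 (aeval_re_im_mem_squaredDistPolynomials h P)
  have hfz (z : ℂ) :
      eval ![‖z - a‖ ^ 2, ‖z - b‖ ^ 2, ‖z - c‖ ^ 2] f = eval ![z.re, z.im] P := by
    have hfz := congr_fun hf z
    rw [aeval_pi_apply, aeval_pi_apply] at hfz
    convert hfz using 3 <;> funext i <;> fin_cases i <;> rfl
  exact ⟨f, hfz, by simp only [hfz]⟩
end

section
/- (Principle of triangulation for covals) For all real numbers p, θ and all complex numbers a, b, c, d, writing q(w) := p + Im(e^{-iθ}w) for w ∈ ℂ, the determinant of the 4×4 complex matrix whose rows are (q(a), q(b), q(c), q(d)), (1, 1, 1, 1), (a, b, c, d), and (ā, b̄, c̄, d̄) equals zero. Consequently every pedal coordinate p(d) is an affine combination of p(a), p(b), p(c). -/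
open Matrix Complex ComplexConjugate

set_option maxHeartbeats 1000000 in
private lemma det_aux (P u v a b c d a' b' c' d' : ℂ) :
    (!![P + (u * a - v * a') / (2 * Complex.I), P + (u * b - v * b') / (2 * Complex.I),
          P + (u * c - v * c') / (2 * Complex.I), P + (u * d - v * d') / (2 * Complex.I);
        1, 1, 1, 1; a, b, c, d; a', b', c', d'] : Matrix (Fin 4) (Fin 4) ℂ).det = 0 := by
  rw [Matrix.det_succ_row_zero]
  simp [Fin.sum_univ_succ, Matrix.det_fin_three, Fin.succAbove, Fin.castSucc, Fin.castAdd, Fin.castLE]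
  ring


/-- Principle of triangulation for covals: for all real `p, θ` and complex `a, b, c, d`,
writing `q(w) := p + Im(e^{-iθ} w)` for the pedal coordinate, the 4×4 determinant with rows
`(q a, q b, q c, q d)`, `(1,1,1,1)`, `(a,b,c,d)`, `(ā, b̄, c̄, d̄)` vanishes. Consequently
(for non-collinear poles `a, b, c`) every pedal coordinate `q d` is an affine combination of
`q a`, `q b`, `q c` with coefficients independent of `p` and `θ`. -/
theorem coval_triangulation :
    (∀ (p θ : ℝ) (a b c d : ℂ),
      (!![((p + (Complex.exp (-(θ : ℂ) * Complex.I) * a).im : ℝ) : ℂ),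
            ((p + (Complex.exp (-(θ : ℂ) * Complex.I) * b).im : ℝ) : ℂ),
            ((p + (Complex.exp (-(θ : ℂ) * Complex.I) * c).im : ℝ) : ℂ),
            ((p + (Complex.exp (-(θ : ℂ) * Complex.I) * d).im : ℝ) : ℂ);
          1, 1, 1, 1;
          a, b, c, d;
          conj a, conj b, conj c, conj d] : Matrix (Fin 4) (Fin 4) ℂ).det = 0) ∧
    ∀ a b c d : ℂ, ¬ Collinear ℝ ({a, b, c} : Set ℂ) →
      ∃ α β γ : ℝ, α + β + γ = 1 ∧ ∀ p θ : ℝ,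
        p + (Complex.exp (-(θ : ℂ) * Complex.I) * d).im =
          α * (p + (Complex.exp (-(θ : ℂ) * Complex.I) * a).im) +
            β * (p + (Complex.exp (-(θ : ℂ) * Complex.I) * b).im) +
            γ * (p + (Complex.exp (-(θ : ℂ) * Complex.I) * c).im) := by
  constructor
  · intro p θ a b c d
    set E : ℂ := Complex.exp (-(θ : ℂ) * Complex.I) with hE
    have h : ∀ w : ℂ, (((E * w).im : ℝ) : ℂ) = (E * w - conj E * conj w) / (2 * Complex.I) := by
      intro w
      rw [eq_div_iff (by simp [Complex.I_ne_zero] : (2 * Complex.I : ℂ) ≠ 0),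
        ← _root_.map_mul, Complex.sub_conj]
      push_cast
      ring
    simp only [Complex.ofReal_add, h]
    exact det_aux (p : ℂ) E (conj E) a b c d (conj a) (conj b) (conj c) (conj d)
  · intro a b c d h
    have hai : AffineIndependent ℝ ![a, b, c] :=
      affineIndependent_iff_not_collinear_set.mpr h
    have htop : affineSpan ℝ (Set.range ![a, b, c]) = ⊤ :=
      hai.affineSpan_eq_top_iff_card_eq_finrank_add_one.mpr
        (by simp [Complex.finrank_real_complex])
    have hd : d ∈ affineSpan ℝ (Set.range ![a, b, c]) := htop ▸ AffineSubspace.mem_top ℝ ℂ d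
    obtain ⟨w, hw, hcomb⟩ := eq_affineCombination_of_mem_affineSpan_of_fintype hd
    rw [Finset.affineCombination_eq_linear_combination _ _ _ hw] at hcomb
    rw [Fin.sum_univ_three] at hw hcomb
    simp only [Matrix.cons_val_zero, Matrix.cons_val_one, Matrix.head_cons,
      Matrix.cons_val_two, Matrix.tail_cons] at hcomb
    refine ⟨w 0, w 1, w 2, hw, fun p θ => ?_⟩
    rw [hcomb]
    simp only [mul_add, mul_smul_comm, Complex.add_im, Complex.smul_im, smul_eq_mul]
    linear_combination (-p) * hw
end

section
/- (Coval equation of the cardioid) Let a > 0 and consider the cardioid γ(t) := 2a(1 + cos t)e^{it}, viewed as a curve in ℂ, with cusp at 0. For every t ∈ ℝ with γ'(t) ≠ 0, define for b ∈ ℂ the pedal coordinate p(b) := Im( conj(γ(t) − b) · γ'(t) ) / ‖γ'(t)‖. Then 27a² · p(0) = 4 · p(a)³. -/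
open Complex ComplexConjugate

/-!
In polar form `γ = r e^{is}` with `r = 2a(1 + cos s)` one has `γ' = (r' + i r) e^{it}`, so
`‖γ'‖² = r'² + r²`, and for a real pole `b` the numerator of `p(b)` is
`r² - b (r' sin t + r cos t)`. With `u = a²(1 + cos t)` this gives `‖γ'‖² = 8u`,
`27a² · p(0) ‖γ'‖ = 27a² r² = 108u²` and `p(a) ‖γ'‖ = 6u`, and `108u²/N = 4 (6u/N)³` follows
from `N² = 8u`.
-/

theorem HasDerivAt.ofReal_mul_exp_mul_I {r : ℝ → ℝ} {r' t : ℝ} (hr : HasDerivAt r r' t) :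
    HasDerivAt (fun s : ℝ => (r s : ℂ) * Complex.exp ((s : ℂ) * I))
      (((r' : ℂ) + (r t : ℂ) * I) * Complex.exp ((t : ℂ) * I)) t := by
  have he : HasDerivAt (fun s : ℝ => Complex.exp ((s : ℂ) * I))
      (Complex.exp ((t : ℂ) * I) * I) t := by
    simpa using ((hasDerivAt_id t).ofReal_comp.mul_const I).cexp
  exact (hr.ofReal_comp.mul he).congr_deriv (by ring)

theorem norm_mul_exp_ofReal_mul_I_sq (z : ℂ) (t : ℝ) :
    ‖z * exp ((t : ℂ) * I)‖ ^ 2 = z.re ^ 2 + z.im ^ 2 := by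
  rw [norm_mul, norm_exp_ofReal_mul_I, mul_one, Complex.sq_norm, normSq_apply]
  ring

theorem im_conj_ofReal_mul_exp_sub_mul (r r' b t : ℝ) :
    (conj ((r : ℂ) * exp ((t : ℂ) * I) - b) * (((r' : ℂ) + (r : ℂ) * I) * exp ((t : ℂ) * I))).im =
      r ^ 2 - b * (r' * Real.sin t + r * Real.cos t) := by
  rw [exp_mul_I, ← ofReal_cos, ← ofReal_sin]
  simp only [map_sub, map_mul, map_add, conj_ofReal, conj_I, mul_im, mul_re, sub_im, sub_re,
    add_im, add_re, neg_im, neg_re, ofReal_re, ofReal_im, I_re, I_im]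
  linear_combination r ^ 2 * Real.sin_sq_add_cos_sq t

theorem mul_sq_div_eq_pow_div_of_sq_eq {u N : ℝ} (hN : N ≠ 0) (h : N ^ 2 = 8 * u) :
    108 * u ^ 2 / N = 4 * (6 * u / N) ^ 3 := by
  obtain rfl : u = N ^ 2 / 8 := by linarith
  field_simp
  ring

theorem cardioid_coval_general (a : ℝ) (t : ℝ)
    (γ : ℝ → ℂ)
    (hγ : γ = fun s : ℝ => 2 * (a : ℂ) * (1 + Real.cos s) * Complex.exp ((s : ℂ) * Complex.I))
    (hreg : deriv γ t ≠ 0) :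
    27 * a ^ 2 * ((conj (γ t - 0) * deriv γ t).im / ‖deriv γ t‖) =
      4 * ((conj (γ t - (a : ℂ)) * deriv γ t).im / ‖deriv γ t‖) ^ 3 := by
  have hpolar : γ = fun s : ℝ => ((2 * a * (1 + Real.cos s) : ℝ) : ℂ) * exp ((s : ℂ) * I) := by
    rw [hγ]; push_cast; rfl
  have hD : HasDerivAt γ (((-(2 * a * Real.sin t) : ℝ) + ((2 * a * (1 + Real.cos t) : ℝ) : ℂ) * I)
      * exp (t * I)) t := by
    rw [hpolar]
    exact (((Real.hasDerivAt_cos t).const_add 1).const_mul (2 * a)).ofReal_mul_exp_mul_I.congr_deriv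
      (by push_cast; ring)
  have hγt : γ t = ((2 * a * (1 + Real.cos t) : ℝ) : ℂ) * exp (t * I) := by rw [hpolar]
  have hN : ‖deriv γ t‖ ^ 2 = 8 * (a ^ 2 * (1 + Real.cos t)) := by
    rw [hD.deriv, norm_mul_exp_ofReal_mul_I_sq]
    simp only [add_re, add_im, mul_re, mul_im, ofReal_re, ofReal_im, I_re, I_im]
    linear_combination 4 * a ^ 2 * Real.sin_sq_add_cos_sq t
  convert mul_sq_div_eq_pow_div_of_sq_eq (norm_ne_zero_iff.2 hreg) hN using 3
  · rw [hγt, hD.deriv, ← ofReal_zero, im_conj_ofReal_mul_exp_sub_mul, mul_div_assoc']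
    ring
  · rw [hγt, hD.deriv, im_conj_ofReal_mul_exp_sub_mul]
    congr 1
    linear_combination 2 * a ^ 2 * Real.sin_sq_add_cos_sq t

/-- Coval equation of the cardioid: for the cardioid `γ(t) = 2a(1 + cos t)e^{it}` with `a > 0`
and cusp at `0`, at every regular point the pedal coordinates
`p(b) = Im(conj(γ(t) − b)·γ'(t)) / ‖γ'(t)‖` satisfy `27a²·p(0) = 4·p(a)³`. -/
theorem cardioid_coval (a : ℝ) (ha : 0 < a) (t : ℝ)
    (γ : ℝ → ℂ)
    (hγ : γ = fun s : ℝ => 2 * (a : ℂ) * (1 + Real.cos s) * Complex.exp ((s : ℂ) * Complex.I))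
    (hreg : deriv γ t ≠ 0) :
    27 * a ^ 2 * ((conj (γ t - 0) * deriv γ t).im / ‖deriv γ t‖) =
      4 * ((conj (γ t - (a : ℂ)) * deriv γ t).im / ‖deriv γ t‖) ^ 3 :=
  cardioid_coval_general a t γ hγ hreg
end

section
/- Let A ∈ ℂ^{n×n} and let W(A) := { (uᴴAu)/(uᴴu) : u ∈ ℂⁿ, u ≠ 0 } be its numerical range. Fix θ ∈ ℝ and let H := (e^{-iθ}A − e^{iθ}Aᴴ)/(2i), a Hermitian matrix, and let p be the largest eigenvalue of −H. Then: (i) the matrix p·I + H is positive semidefinite; (ii) det(p·I + H) = 0; (iii) for every z ∈ W(A), p + Im(e^{-iθ}z) ≥ 0; and (iv) there exists z ∈ W(A) with p + Im(e^{-iθ}z) = 0. (Hence the line {z ∈ ℂ : p + Im(e^{-iθ}z) = 0} is a support line of W(A), and the boundary of the numerical range satisfies det(p(A)) = 0 with p(A) := pI + Im(e^{-iθ}A) positive semidefinite.) -/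
open Matrix Complex
open scoped ComplexOrder

lemma aux_conj_dotProduct (n : ℕ) (A : Matrix (Fin n) (Fin n) ℂ) (u : Fin n → ℂ) :
    star u ⬝ᵥ Aᴴ *ᵥ u = star (star u ⬝ᵥ A *ᵥ u) := by
  simp only [dotProduct, Matrix.mulVec, Matrix.conjTranspose_apply, Pi.star_apply,
    Finset.mul_sum, star_sum, star_mul', star_star]
  rw [Finset.sum_comm]
  simp [mul_comm, mul_left_comm, mul_assoc]

lemma aux_norm_dotProduct (n : ℕ) (u : Fin n → ℂ) :
    star u ⬝ᵥ u = ((∑ i, Complex.normSq (u i) : ℝ) : ℂ) := by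
  push_cast
  simp [dotProduct, Complex.normSq_eq_conj_mul_self]

lemma aux_norm_pos (n : ℕ) (u : Fin n → ℂ) (hu : u ≠ 0) :
    0 < ∑ i, Complex.normSq (u i) := by
  obtain ⟨j, hj⟩ := Function.ne_iff.mp hu
  exact Finset.sum_pos' (fun i _ => Complex.normSq_nonneg _)
    ⟨j, Finset.mem_univ j, by simpa [Complex.normSq_pos] using hj⟩

/-- For `A ∈ ℂ^{n×n}` and `θ ∈ ℝ`, let `H := (e^{-iθ}A − e^{iθ}Aᴴ)/(2i)` and let `p` be the
largest eigenvalue of `−H`. Then `p·I + H` is positive semidefinite with zero determinant,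
every `z` in the numerical range `W(A)` satisfies `p + Im(e^{-iθ}z) ≥ 0`, and equality is
attained for some `z ∈ W(A)`; i.e. the line `p + Im(e^{-iθ}z) = 0` supports `W(A)` and the
boundary of the numerical range satisfies `det (p(A)) = 0` with `p(A) = pI + Im(e^{-iθ}A) ⪰ 0`. -/
theorem boundary_numerical_range_copolar (n : ℕ) (A : Matrix (Fin n) (Fin n) ℂ) (θ : ℝ)
    (H : Matrix (Fin n) (Fin n) ℂ)
    (hH : H = (2 * Complex.I)⁻¹ •
        (Complex.exp (-(θ : ℂ) * Complex.I) • A - Complex.exp ((θ : ℂ) * Complex.I) • Aᴴ))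
    (p : ℝ)
    (hp : IsGreatest {x : ℝ | ∃ v : Fin n → ℂ, v ≠ 0 ∧ (-H).mulVec v = (x : ℂ) • v} p)
    (W : Set ℂ)
    (hW : W = {z : ℂ | ∃ u : Fin n → ℂ, u ≠ 0 ∧ z = (star u ⬝ᵥ A.mulVec u) / (star u ⬝ᵥ u)}) :
    ((p : ℂ) • (1 : Matrix (Fin n) (Fin n) ℂ) + H).PosSemidef ∧
    ((p : ℂ) • (1 : Matrix (Fin n) (Fin n) ℂ) + H).det = 0 ∧
    (∀ z ∈ W, 0 ≤ p + (Complex.exp (-(θ : ℂ) * Complex.I) * z).im) ∧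
    (∃ z ∈ W, p + (Complex.exp (-(θ : ℂ) * Complex.I) * z).im = 0) := by
  have hθ : Complex.exp ((θ : ℂ) * Complex.I) = star (Complex.exp (-(θ : ℂ) * Complex.I)) := by
    rw [RCLike.star_def, ← Complex.exp_conj]; congr 1; simp
  rw [hθ] at hH
  set e := Complex.exp (-(θ : ℂ) * Complex.I) with he
  have hstar2I : star ((2 * Complex.I)⁻¹) = -(2 * Complex.I)⁻¹ := by
    simp [star_inv₀]
  -- H is Hermitian
  have hHerm : H.IsHermitian := by
    rw [Matrix.IsHermitian, hH, Matrix.conjTranspose_smul, Matrix.conjTranspose_sub,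
      Matrix.conjTranspose_smul, Matrix.conjTranspose_smul, Matrix.conjTranspose_conjTranspose,
      star_star, hstar2I, neg_smul, ← smul_neg, neg_sub]
  -- quadratic form of H is the imaginary part
  have key : ∀ u : Fin n → ℂ,
      star u ⬝ᵥ H *ᵥ u = (((e * (star u ⬝ᵥ A *ᵥ u)).im : ℝ) : ℂ) := by
    intro u
    rw [hH, Matrix.smul_mulVec, Matrix.sub_mulVec, Matrix.smul_mulVec,
      Matrix.smul_mulVec, dotProduct_smul, dotProduct_sub, dotProduct_smul, dotProduct_smul,
      aux_conj_dotProduct]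
    rw [smul_eq_mul, smul_eq_mul, smul_eq_mul, ← star_mul']
    rw [Complex.im_eq_sub_conj]
    field_simp
    rfl
  set M := (p : ℂ) • (1 : Matrix (Fin n) (Fin n) ℂ) + H with hMdef
  -- quadratic form of M
  have keyM : ∀ u : Fin n → ℂ,
      star u ⬝ᵥ M *ᵥ u =
        ((p * ∑ i, Complex.normSq (u i) + (e * (star u ⬝ᵥ A *ᵥ u)).im : ℝ) : ℂ) := by
    intro u
    rw [hMdef, Matrix.add_mulVec, Matrix.smul_mulVec, Matrix.one_mulVec, dotProduct_add,
      dotProduct_smul, key, smul_eq_mul, aux_norm_dotProduct]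
    push_cast
    ring
  have hM : M.IsHermitian := by
    simp [hMdef, Matrix.IsHermitian, Matrix.conjTranspose_add, Matrix.conjTranspose_smul, hHerm.eq]
  -- positive semidefiniteness
  have hPSD : M.PosSemidef := by
    refine hM.posSemidef_iff_eigenvalues_nonneg.mpr fun i => ?_
    set μ := hM.eigenvalues i with hμ
    have hu := hM.mulVec_eigenvectorBasis i
    set u : Fin n → ℂ := ⇑(hM.eigenvectorBasis i) with hudef
    have hu0 : u ≠ 0 := by
      have h1 := hM.eigenvectorBasis.orthonormal.ne_zero i
      intro h; apply h1; ext j; exact congrFun h j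
    have hmem : p - μ ∈ {x : ℝ | ∃ v : Fin n → ℂ, v ≠ 0 ∧ (-H).mulVec v = (x : ℂ) • v} := by
      refine ⟨u, hu0, ?_⟩
      have h2 : H *ᵥ u = (μ : ℂ) • u - (p : ℂ) • u := by
        have h3 : M *ᵥ u = (μ : ℂ) • u := by
          rw [hu]; ext j; simp [Complex.real_smul, hμ]
        rw [hMdef, Matrix.add_mulVec, Matrix.smul_mulVec, Matrix.one_mulVec] at h3
        rw [← h3]; abel
      rw [Matrix.neg_mulVec, h2]
      ext j
      push_cast
      simp
      ring
    have := hp.2 hmem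
    exact (show (0:ℝ) ≤ μ by linarith)
  -- eigenvector for the largest eigenvalue
  obtain ⟨v, hv0, hv⟩ := hp.1
  have hMv : M *ᵥ v = 0 := by
    rw [Matrix.neg_mulVec, neg_eq_iff_eq_neg] at hv
    rw [hMdef, Matrix.add_mulVec, Matrix.smul_mulVec, Matrix.one_mulVec, hv]
    abel
  have hdet : M.det = 0 := by
    rw [← Matrix.exists_mulVec_eq_zero_iff]
    exact ⟨v, hv0, hMv⟩
  -- the quantity p + Im(e z) for z given by vector u
  have quant : ∀ u : Fin n → ℂ, u ≠ 0 →
      p + (e * ((star u ⬝ᵥ A *ᵥ u) / (star u ⬝ᵥ u))).im =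
        (p * (∑ i, Complex.normSq (u i)) + (e * (star u ⬝ᵥ A *ᵥ u)).im) /
          (∑ i, Complex.normSq (u i)) := by
    intro u hu0
    have hr := aux_norm_pos n u hu0
    rw [aux_norm_dotProduct, mul_div_assoc' e, Complex.div_ofReal_im, add_div,
      mul_div_cancel_right₀ _ hr.ne']
  refine ⟨hPSD, hdet, ?_, ?_⟩
  · intro z hz
    rw [hW] at hz
    obtain ⟨u, hu0, rfl⟩ := hz
    have hr := aux_norm_pos n u hu0
    have hq := hPSD.dotProduct_mulVec_nonneg u
    rw [keyM] at hq
    have hre : (0 : ℝ) ≤ p * (∑ i, Complex.normSq (u i)) + (e * (star u ⬝ᵥ A *ᵥ u)).im := by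
      have := hq.1
      simpa using this
    rw [quant u hu0]
    exact div_nonneg hre hr.le
  · refine ⟨(star v ⬝ᵥ A *ᵥ v) / (star v ⬝ᵥ v), by rw [hW]; exact ⟨v, hv0, rfl⟩, ?_⟩
    have hr := aux_norm_pos n v hv0
    have hq : star v ⬝ᵥ M *ᵥ v = 0 := by rw [hMv]; simp
    rw [keyM] at hq
    have hre : p * (∑ i, Complex.normSq (v i)) + (e * (star v ⬝ᵥ A *ᵥ v)).im = 0 := by
      exact_mod_cast hq
    rw [quant v hv0, hre, zero_div]
end

section
/- (Greedy algorithm lemma, main case) Let f be a complex polynomial in three variables x, y, z that is homogeneous of degree m ≥ 2 and satisfies the conjugate-swap symmetry: the polynomial obtained from f by conjugating all coefficients equals the polynomial obtained from f by exchanging the variables y and z. Suppose f(1,0,0) ≠ 0 and let λ₁, …, λ_m ∈ ℂ be the roots (with multiplicity) of the univariate polynomial X ↦ f(X, 0, 1), so that f(X,0,1) = f(1,0,0)·∏_{j=1}^m (X − λ_j). Then the polynomial f(x,y,z) − f(1,0,0)·∏_{j=1}^m (x − conj(λ_j)·y − λ_j·z) is divisible by the monomial y·z, and the quotient g := ( f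 − f(1,0,0)·∏_j (x − conj(λ_j) y − λ_j z) ) / (yz) is a homogeneous polynomial of degree m − 2 which again satisfies the conjugate-swap symmetry. -/
open MvPolynomial ComplexConjugate

namespace GreedyAux

lemma X1X2_dvd {p : MvPolynomial (Fin 3) ℂ}
    (h : ∀ d : Fin 3 →₀ ℕ, d 1 = 0 ∨ d 2 = 0 → MvPolynomial.coeff d p = 0) :
    (MvPolynomial.X 1 : MvPolynomial (Fin 3) ℂ) * MvPolynomial.X 2 ∣ p := by
  classical
  rw [p.as_sum]
  refine Finset.dvd_sum fun d _ => ?_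
  by_cases hd : d 1 = 0 ∨ d 2 = 0
  · rw [h d hd, monomial_zero]
    exact dvd_zero _
  · push_neg at hd
    have : (X 1 : MvPolynomial (Fin 3) ℂ) * X 2 =
        monomial (Finsupp.single 1 1 + Finsupp.single 2 1) 1 := by
      rw [X, X, monomial_mul, one_mul]
    rw [this, monomial_dvd_monomial]
    refine ⟨Or.inr ?_, one_dvd _⟩
    intro i
    fin_cases i <;>
      simp [Finsupp.single_apply, Nat.one_le_iff_ne_zero, hd.1, hd.2]

lemma coeff_bind₁_eq {p : MvPolynomial (Fin 3) ℂ} {s : Fin 3 → MvPolynomial (Fin 3) ℂ}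
    {i : Fin 3} (hsi : s i = 0) (hs : ∀ j, j ≠ i → s j = X j)
    (e : Fin 3 →₀ ℕ) (he : e i = 0) :
    coeff e (bind₁ s p) = coeff e p := by
  classical
  conv_lhs => rw [p.as_sum, map_sum]
  have key : ∀ d : Fin 3 →₀ ℕ, bind₁ s (monomial d (coeff d p)) =
      if d i = 0 then monomial d (coeff d p) else 0 := by
    intro d
    rw [bind₁_monomial]
    by_cases hd : d i = 0
    · rw [if_pos hd, monomial_eq]
      congr 1
      apply Finsupp.prod_congr
      intro j hj
      rw [hs j (by rintro rfl; exact (Finsupp.mem_support_iff.mp hj) hd)]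
    · rw [if_neg hd]
      exact mul_eq_zero_of_right _
        (Finset.prod_eq_zero (Finsupp.mem_support_iff.mpr hd) (by rw [hsi, zero_pow hd]))
  rw [Finset.sum_congr rfl fun d _ => key d, MvPolynomial.coeff_sum]
  simp only [apply_ite (coeff e), coeff_monomial, coeff_zero]
  rw [Finset.sum_eq_single e]
  · simp [he]
  · intro d _ hde
    simp [hde]
  · intro he'
    simp [MvPolynomial.notMem_support_iff.mp he']

lemma eval_smul_of_isHomogeneous {m : ℕ} {f : MvPolynomial (Fin 3) ℂ}
    (hf : f.IsHomogeneous m) (t : ℂ) (v : Fin 3 → ℂ) :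
    eval (fun i => t * v i) f = t ^ m * eval v f := by
  rw [eval_eq, eval_eq, Finset.mul_sum]
  refine Finset.sum_congr rfl fun d hd => ?_
  have hdm : ∑ i ∈ d.support, d i = m := by
    have h := hf (MvPolynomial.mem_support_iff.mp hd)
    rw [← h, show (Finsupp.weight (1 : Fin 3 → ℕ)) = Finsupp.weight (fun _ => 1) from rfl,
      ← Finsupp.degree_eq_weight_one]
    rfl
  calc coeff d f * ∏ i ∈ d.support, (t * v i) ^ d i
      = coeff d f * ((∏ i ∈ d.support, t ^ d i) * ∏ i ∈ d.support, v i ^ d i) := by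
        rw [← Finset.prod_mul_distrib]; simp_rw [mul_pow]
    _ = t ^ m * (coeff d f * ∏ i ∈ d.support, v i ^ d i) := by
        rw [Finset.prod_pow_eq_pow_sum, hdm]; ring

lemma eval_bind₁' (v : Fin 3 → ℂ) (g : Fin 3 → MvPolynomial (Fin 3) ℂ)
    (p : MvPolynomial (Fin 3) ℂ) :
    eval v (bind₁ g p) = eval (fun i => eval v (g i)) p :=
  eval₂Hom_bind₁ (RingHom.id ℂ) v g p

end GreedyAux

open GreedyAux

/-- Greedy algorithm lemma (main case): if `f ∈ ℂ[x,y,z]` is homogeneous of degree `m ≥ 2`,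
satisfies the conjugate-swap symmetry (conjugating all coefficients equals swapping `y` and `z`),
has `f(1,0,0) ≠ 0`, and `f(X,0,1) = f(1,0,0)·∏ⱼ (X − λⱼ)`, then
`f − f(1,0,0)·∏ⱼ (x − conj(λⱼ)y − λⱼz)` is divisible by `y·z`, with quotient `g` a homogeneous
polynomial of degree `m − 2` again satisfying the conjugate-swap symmetry. -/
theorem greedy_algorithm_main_case (m : ℕ) (hm : 2 ≤ m) (f : MvPolynomial (Fin 3) ℂ)
    (hhom : f.IsHomogeneous m)
    (hsym : MvPolynomial.map (starRingEnd ℂ) f =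
      MvPolynomial.rename (Equiv.swap (1 : Fin 3) 2) f)
    (hne : MvPolynomial.eval ![1, 0, 0] f ≠ 0)
    (lam : Fin m → ℂ)
    (hroots : ∀ X : ℂ, MvPolynomial.eval ![X, 0, 1] f =
      MvPolynomial.eval ![1, 0, 0] f * ∏ j, (X - lam j)) :
    ∃ g : MvPolynomial (Fin 3) ℂ,
      g.IsHomogeneous (m - 2) ∧
      MvPolynomial.map (starRingEnd ℂ) g =
        MvPolynomial.rename (Equiv.swap (1 : Fin 3) 2) g ∧
      f - MvPolynomial.C (MvPolynomial.eval ![1, 0, 0] f) *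
          ∏ j, (MvPolynomial.X 0 - MvPolynomial.C (conj (lam j)) * MvPolynomial.X 1 -
            MvPolynomial.C (lam j) * MvPolynomial.X 2) =
        MvPolynomial.X 1 * MvPolynomial.X 2 * g := by
  classical
  set c : ℂ := MvPolynomial.eval ![1, 0, 0] f with hc
  set sw : Equiv.Perm (Fin 3) := Equiv.swap (1 : Fin 3) 2 with hsw
  have hsw0 : sw 0 = 0 := Equiv.swap_apply_of_ne_of_ne (by decide) (by decide)
  have hsw1 : sw 1 = 2 := Equiv.swap_apply_left _ _
  have hsw2 : sw 2 = 1 := Equiv.swap_apply_right _ _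
  set P : MvPolynomial (Fin 3) ℂ :=
    MvPolynomial.C c * ∏ j, (MvPolynomial.X 0 - MvPolynomial.C (conj (lam j)) * MvPolynomial.X 1 -
      MvPolynomial.C (lam j) * MvPolynomial.X 2) with hP
  -- c is real
  have hcreal : conj c = c := by
    have h1 := congrArg (MvPolynomial.eval ![(1 : ℂ), 0, 0]) hsym
    rw [eval_map, eval_rename] at h1
    have h2 : MvPolynomial.eval₂ (starRingEnd ℂ) ![(1 : ℂ), 0, 0] f = conj c := by
      rw [hc, MvPolynomial.eval, coe_eval₂Hom,
        MvPolynomial.eval₂_comp_left (starRingEnd ℂ) (RingHom.id ℂ) ![(1 : ℂ), 0, 0] f,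
        RingHom.comp_id]
      congr 1
      funext i
      fin_cases i <;> simp
    have h3 : (![(1 : ℂ), 0, 0] ∘ sw) = ![(1 : ℂ), 0, 0] := by
      funext i
      fin_cases i <;> simp [hsw0, hsw1, hsw2]
    rw [h2, h3] at h1
    exact h1
  -- slice at y = 0
  have hslice : bind₁ ![(X 0 : MvPolynomial (Fin 3) ℂ), 0, X 2] f =
      MvPolynomial.C c * ∏ j, (X 0 - MvPolynomial.C (lam j) * X 2) := by
    apply MvPolynomial.funext
    intro v
    rw [eval_bind₁']
    have hv : (fun i => MvPolynomial.eval v (![(X 0 : MvPolynomial (Fin 3) ℂ), 0, X 2] i)) =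
        ![v 0, 0, v 2] := by
      funext i; fin_cases i <;> simp
    rw [hv]
    have hRHS : MvPolynomial.eval v (MvPolynomial.C c * ∏ j, (X 0 - MvPolynomial.C (lam j) * X 2)) =
        c * ∏ j, (v 0 - lam j * v 2) := by
      simp [eval_prod]
    rw [hRHS]
    by_cases hv2 : v 2 = 0
    · have h4 : ![v 0, 0, v 2] = fun i => v 0 * ![(1 : ℂ), 0, 0] i := by
        funext i; fin_cases i <;> simp [hv2]
      rw [h4, eval_smul_of_isHomogeneous hhom, ← hc]
      simp only [hv2, mul_zero, sub_zero]
      rw [Finset.prod_const, Finset.card_univ, Fintype.card_fin]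
      ring
    · have h4 : ![v 0, 0, v 2] = fun i => v 2 * ![v 0 / v 2, 0, 1] i := by
        funext i
        fin_cases i <;> simp [hv2, mul_div_cancel₀]
      rw [h4, eval_smul_of_isHomogeneous hhom, hroots (v 0 / v 2)]
      have h5 : ∀ j : Fin m, v 0 - lam j * v 2 = v 2 * (v 0 / v 2 - lam j) := by
        intro j
        rw [mul_sub, mul_div_cancel₀ _ hv2]
        ring
      rw [Finset.prod_congr rfl fun j _ => h5 j, Finset.prod_mul_distrib,
        Finset.prod_const, Finset.card_univ, Fintype.card_fin]
      ring
  -- slice of P at y = 0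
  have hPslice : bind₁ ![(X 0 : MvPolynomial (Fin 3) ℂ), 0, X 2] P =
      MvPolynomial.C c * ∏ j, (X 0 - MvPolynomial.C (lam j) * X 2) := by
    rw [hP, map_mul, map_prod]
    simp only [map_sub, map_mul, bind₁_X_right, algHom_C]
    congr 1
    refine Finset.prod_congr rfl fun j _ => ?_
    simp
  -- h0 := f - P, divisible by X 1
  set h0 : MvPolynomial (Fin 3) ℂ := f - P with hh0
  have hb1 : bind₁ ![(X 0 : MvPolynomial (Fin 3) ℂ), 0, X 2] h0 = 0 := by
    rw [hh0, map_sub, hslice, hPslice, sub_self]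
  have hcoeff1 : ∀ d : Fin 3 →₀ ℕ, d 1 = 0 → coeff d h0 = 0 := by
    intro d hd
    rw [← coeff_bind₁_eq (s := ![(X 0 : MvPolynomial (Fin 3) ℂ), 0, X 2]) (i := 1)
      (by simp) (fun j hj => by fin_cases j <;> simp_all) d hd, hb1, coeff_zero]
  -- slice of f at z = 0 via symmetry
  have hslice2 : bind₁ ![(X 0 : MvPolynomial (Fin 3) ℂ), 0, X 1] f =
      MvPolynomial.C c * ∏ j, (X 0 - MvPolynomial.C (lam j) * X 1) := by
    have h6 := congrArg (rename sw) hslice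
    rw [rename_bind₁] at h6
    have h7 : (fun i => rename sw (![(X 0 : MvPolynomial (Fin 3) ℂ), 0, X 2] i)) =
        ![(X 0 : MvPolynomial (Fin 3) ℂ), 0, X 1] := by
      funext i
      fin_cases i <;> simp [hsw0, hsw1, hsw2]
    rw [h7] at h6
    rw [h6, map_mul, map_prod, rename_C]
    congr 1
    refine Finset.prod_congr rfl fun j _ => ?_
    simp [hsw0, hsw2]
  have hslice3 : bind₁ ![(X 0 : MvPolynomial (Fin 3) ℂ), X 1, 0] f =
      MvPolynomial.C c * ∏ j, (X 0 - MvPolynomial.C (conj (lam j)) * X 1) := by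
    have hf2 : rename (⇑sw) (MvPolynomial.map (starRingEnd ℂ) f) = f := by
      rw [hsym, rename_rename]
      have : (⇑sw ∘ ⇑sw) = id := by
        funext i
        simp [Function.comp, hsw, Equiv.swap_apply_self]
      rw [this, rename_id, AlgHom.id_apply]
    calc bind₁ ![(X 0 : MvPolynomial (Fin 3) ℂ), X 1, 0] f
        = bind₁ ![(X 0 : MvPolynomial (Fin 3) ℂ), X 1, 0]
            (rename (⇑sw) (MvPolynomial.map (starRingEnd ℂ) f)) := by rw [hf2]
      _ = bind₁ (![(X 0 : MvPolynomial (Fin 3) ℂ), X 1, 0] ∘ ⇑sw)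
            (MvPolynomial.map (starRingEnd ℂ) f) := bind₁_rename _ _ _
      _ = bind₁ ![(X 0 : MvPolynomial (Fin 3) ℂ), 0, X 1]
            (MvPolynomial.map (starRingEnd ℂ) f) := by
          have harg : (![(X 0 : MvPolynomial (Fin 3) ℂ), X 1, 0] ∘ ⇑sw) =
              ![(X 0 : MvPolynomial (Fin 3) ℂ), 0, X 1] := by
            funext i
            fin_cases i <;> simp [hsw0, hsw1, hsw2]
          rw [harg]
      _ = MvPolynomial.map (starRingEnd ℂ) (bind₁ ![(X 0 : MvPolynomial (Fin 3) ℂ), 0, X 1] f) := by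
          rw [map_bind₁]
          have harg : (fun i => MvPolynomial.map (starRingEnd ℂ)
              (![(X 0 : MvPolynomial (Fin 3) ℂ), 0, X 1] i)) =
              ![(X 0 : MvPolynomial (Fin 3) ℂ), 0, X 1] := by
            funext i
            fin_cases i <;> simp
          rw [harg]
      _ = MvPolynomial.C c * ∏ j, (X 0 - MvPolynomial.C (conj (lam j)) * X 1) := by
          rw [hslice2, map_mul, map_prod, MvPolynomial.map_C, hcreal]
          congr 1
          refine Finset.prod_congr rfl fun j _ => ?_
          simp
  -- slice of P at z = 0
  have hPslice3 : bind₁ ![(X 0 : MvPolynomial (Fin 3) ℂ), X 1, 0] P =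
      MvPolynomial.C c * ∏ j, (X 0 - MvPolynomial.C (conj (lam j)) * X 1) := by
    rw [hP, map_mul, map_prod]
    simp only [map_sub, map_mul, bind₁_X_right, algHom_C]
    congr 1
    refine Finset.prod_congr rfl fun j _ => ?_
    simp
  have hb2 : bind₁ ![(X 0 : MvPolynomial (Fin 3) ℂ), X 1, 0] h0 = 0 := by
    rw [hh0, map_sub, hslice3, hPslice3, sub_self]
  have hcoeff2 : ∀ d : Fin 3 →₀ ℕ, d 2 = 0 → coeff d h0 = 0 := by
    intro d hd
    rw [← coeff_bind₁_eq (s := ![(X 0 : MvPolynomial (Fin 3) ℂ), X 1, 0]) (i := 2)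
      (by simp) (fun j hj => by fin_cases j <;> simp_all) d hd, hb2, coeff_zero]
  -- divisibility
  obtain ⟨g, hg⟩ : (MvPolynomial.X 1 : MvPolynomial (Fin 3) ℂ) * MvPolynomial.X 2 ∣ h0 :=
    X1X2_dvd fun d hd => hd.elim (hcoeff1 d) (hcoeff2 d)
  refine ⟨g, ?_, ?_, hg⟩
  · -- homogeneity
    have hPhom : P.IsHomogeneous m := by
      rw [hP]
      have hm' : ∀ j : Fin m, ((X 0 : MvPolynomial (Fin 3) ℂ) -
          MvPolynomial.C (conj (lam j)) * X 1 - MvPolynomial.C (lam j) * X 2).IsHomogeneous 1 :=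
        fun j => ((isHomogeneous_X ℂ 0).sub (isHomogeneous_C_mul_X _ _)).sub
          (isHomogeneous_C_mul_X _ _)
      have := (MvPolynomial.IsHomogeneous.prod Finset.univ _ (fun _ => 1) fun j _ => hm' j).C_mul c
      simpa using this
    have hh0hom : h0.IsHomogeneous m := hhom.sub hPhom
    intro d hd
    have hkey : coeff (Finsupp.single 1 1 + (Finsupp.single 2 1 + d)) h0 = coeff d g := by
      rw [hg, mul_assoc, coeff_X_mul, coeff_X_mul]
    have hw := hh0hom (by rw [hkey]; exact hd)
    rw [map_add, map_add] at hw
    have hws : ∀ i : Fin 3, (Finsupp.weight (1 : Fin 3 → ℕ)) (Finsupp.single i 1) = 1 := by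
      intro i
      rw [Finsupp.weight_apply, Finsupp.sum_single_index] <;> simp
    rw [hws 1, hws 2] at hw
    omega
  · -- symmetry
    have hsymP : MvPolynomial.map (starRingEnd ℂ) P = rename (⇑sw) P := by
      rw [hP, map_mul, map_mul, map_prod, map_prod, MvPolynomial.map_C, rename_C, hcreal]
      congr 1
      refine Finset.prod_congr rfl fun j _ => ?_
      simp only [map_sub, map_mul, MvPolynomial.map_C, MvPolynomial.map_X, rename_X, rename_C,
        hsw0, hsw1, hsw2, RingHom.coe_coe, Complex.conj_conj]
      ring
    have hsymh : MvPolynomial.map (starRingEnd ℂ) h0 = rename (⇑sw) h0 := by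
      rw [hh0, map_sub, map_sub, hsym, hsymP]
    rw [hg, map_mul, map_mul, map_mul, map_mul, MvPolynomial.map_X, MvPolynomial.map_X,
      rename_X, rename_X, hsw1, hsw2] at hsymh
    have hne12 : (MvPolynomial.X 1 : MvPolynomial (Fin 3) ℂ) * MvPolynomial.X 2 ≠ 0 :=
      mul_ne_zero (MvPolynomial.X_ne_zero 1) (MvPolynomial.X_ne_zero 2)
    apply mul_left_cancel₀ hne12
    rw [hsymh]
    ring
end

section
/- (Explicit form of the secondary-value equation) Let A ∈ ℂ^{n×n} be upper triangular with diagonal entries (eigenvalues) λ₁, …, λ_n. Let adj denote the adjugate matrix, let e_k be the k-th elementary symmetric polynomial of λ₁,…,λ_n, and define t_j(A) := tr(A^j·Aᴴ) − Σ_{i=1}^n λ_i^j·conj(λ_i). Then for every x ∈ ℂ: tr( adj(x·I − A)·Aᴴ ) − Σ_{j=1}^{n} conj(λ_j)·∏_{i≠j}(x − λ_i) = Σ_{j=1}^{n−1} Σ_{k=0}^{n−1−j} t_j(A)·x^{n−1−j−k}·(−1)^k·e_k. -/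
set_option maxRecDepth 4000

open Matrix Complex ComplexConjugate Polynomial Finset

private lemma mapMatrix_smul' {R S m : Type*} [Fintype m] [DecidableEq m] [CommRing R] [CommRing S]
    (f : R →+* S) (r : R) (N : Matrix m m R) :
    f.mapMatrix (r • N) = f r • f.mapMatrix N := by
  ext i j
  simp [RingHom.mapMatrix_apply, Matrix.map_apply, smul_eq_mul]

private lemma adj_formula {n : ℕ} (A : Matrix (Fin n) (Fin n) ℂ)
    (hA : A.BlockTriangular id) (x : ℂ) :
    (x • (1 : Matrix (Fin n) (Fin n) ℂ) - A).adjugate =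
      ∑ i ∈ range (n + 1), (∏ l, (X - C (A l l)) : ℂ[X]).coeff i •
        ∑ j ∈ range i, x ^ j • A ^ (i - 1 - j) := by
  set p : ℂ[X] := ∏ l, (X - C (A l l)) with hp
  have hchar : A.charpoly = p := Matrix.charpoly_of_upperTriangular A hA
  have hdeg : p.natDegree < n + 1 := by
    rw [← hchar, Matrix.charpoly_natDegree_eq_dim]
    simp
  set B : Matrix (Fin n) (Fin n) ℂ[X] := (C : ℂ →+* ℂ[X]).mapMatrix A with hB
  set M : Matrix (Fin n) (Fin n) ℂ[X] := charmatrix A with hM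
  set q : Matrix (Fin n) (Fin n) ℂ[X] :=
    ∑ i ∈ range (n + 1), C (p.coeff i) •
      ∑ j ∈ range i, (Matrix.scalar (Fin n) (X : ℂ[X])) ^ j * B ^ (i - 1 - j) with hq
  have hcomm : Commute (Matrix.scalar (Fin n) (X : ℂ[X])) B :=
    Matrix.scalar_commute _ (fun r' => Commute.all _ r') B
  have hscalar : ∀ (r : ℂ[X]), Matrix.scalar (Fin n) r = r • (1 : Matrix (Fin n) (Fin n) ℂ[X]) := by
    intro r
    ext i j
    simp [Matrix.scalar_apply, Matrix.diagonal_apply, Matrix.one_apply, smul_eq_mul]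
  have hMq : M * q = p • (1 : Matrix (Fin n) (Fin n) ℂ[X]) := by
    have hM' : M = Matrix.scalar (Fin n) (X : ℂ[X]) - B := rfl
    rw [hq, Finset.mul_sum]
    have step : ∀ i, M * (C (p.coeff i) •
        ∑ j ∈ range i, (Matrix.scalar (Fin n) (X : ℂ[X])) ^ j * B ^ (i - 1 - j))
        = C (p.coeff i) • ((Matrix.scalar (Fin n) (X : ℂ[X])) ^ i - B ^ i) := by
      intro i
      rw [mul_smul_comm, hM', hcomm.mul_geom_sum₂]
    rw [Finset.sum_congr rfl fun i _ => step i]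
    have hsplit : ∑ i ∈ range (n + 1), C (p.coeff i) •
          ((Matrix.scalar (Fin n) (X : ℂ[X])) ^ i - B ^ i)
        = (∑ i ∈ range (n + 1), C (p.coeff i) • (Matrix.scalar (Fin n) (X : ℂ[X])) ^ i)
          - ∑ i ∈ range (n + 1), C (p.coeff i) • B ^ i := by
      rw [← Finset.sum_sub_distrib]
      exact Finset.sum_congr rfl fun i _ => smul_sub _ _ _
    rw [hsplit]
    have h1 : ∑ i ∈ range (n + 1), C (p.coeff i) • (Matrix.scalar (Fin n) (X : ℂ[X])) ^ i
        = p • (1 : Matrix (Fin n) (Fin n) ℂ[X]) := by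
      have : ∀ i, C (p.coeff i) • (Matrix.scalar (Fin n) (X : ℂ[X])) ^ i
          = (C (p.coeff i) * X ^ i) • (1 : Matrix (Fin n) (Fin n) ℂ[X]) := by
        intro i
        rw [← map_pow, hscalar, smul_smul]
      rw [Finset.sum_congr rfl fun i _ => this i, ← Finset.sum_smul]
      congr 1
      simp_rw [C_mul_X_pow_eq_monomial]
      exact (Polynomial.as_sum_range' p (n + 1) hdeg).symm
    have h2 : ∑ i ∈ range (n + 1), C (p.coeff i) • B ^ i = 0 := by
      have hA0 : ∑ i ∈ range (n + 1), p.coeff i • A ^ i = 0 := by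
        rw [← Polynomial.aeval_eq_sum_range' hdeg A, ← hchar]
        exact A.aeval_self_charpoly
      have hterm : ∀ i : ℕ, (C : ℂ →+* ℂ[X]).mapMatrix (p.coeff i • A ^ i)
          = C (p.coeff i) • B ^ i := by
        intro i
        rw [mapMatrix_smul', _root_.map_pow]
      have := congrArg (RingHom.mapMatrix (C : ℂ →+* ℂ[X])) hA0
      rw [map_sum, Finset.sum_congr rfl fun i _ => hterm i, map_zero] at this
      exact this
    rw [h1, h2, sub_zero]
  have hdet : M.det = p := by rw [← hchar]; rfl
  have hp0 : p ≠ 0 :=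
    (monic_prod_of_monic _ _ fun l _ => monic_X_sub_C (A l l)).ne_zero
  have hadj : M.adjugate = q := by
    have e1 : M.adjugate * (M * M.adjugate) = M.adjugate * (M * q) := by
      rw [Matrix.mul_adjugate, hMq, hdet]
    rw [← mul_assoc, ← mul_assoc, Matrix.adjugate_mul, hdet] at e1
    have e2 : p • M.adjugate = p • q := by
      simpa [Matrix.smul_mul, one_mul] using e1
    refine Matrix.ext fun i j => mul_left_cancel₀ hp0 ?_
    have := congrFun (congrFun e2 i) j
    simpa [Matrix.smul_apply, smul_eq_mul] using this
  have hmapM : (Polynomial.evalRingHom x).mapMatrix M = x • (1 : Matrix (Fin n) (Fin n) ℂ) - A := by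
    ext i j
    simp only [RingHom.mapMatrix_apply, Matrix.map_apply, hM, charmatrix_apply,
      Matrix.sub_apply, Matrix.smul_apply, Matrix.one_apply, Matrix.diagonal_apply,
      smul_eq_mul, map_sub, eval_C, coe_evalRingHom]
    split <;> simp
  have hBmap : (Polynomial.evalRingHom x).mapMatrix B = A := by
    ext i j
    simp [hB, RingHom.mapMatrix_apply, Matrix.map_apply]
  have hSmap : (Polynomial.evalRingHom x).mapMatrix (Matrix.scalar (Fin n) (X : ℂ[X]))
      = x • (1 : Matrix (Fin n) (Fin n) ℂ) := by
    ext i j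
    simp only [RingHom.mapMatrix_apply, Matrix.map_apply, Matrix.scalar_apply,
      Matrix.diagonal_apply, Matrix.smul_apply, Matrix.one_apply, smul_eq_mul]
    split <;> simp
  calc (x • (1 : Matrix (Fin n) (Fin n) ℂ) - A).adjugate
      = ((Polynomial.evalRingHom x).mapMatrix M).adjugate := by rw [hmapM]
    _ = (Polynomial.evalRingHom x).mapMatrix M.adjugate :=
        ((Polynomial.evalRingHom x).map_adjugate M).symm
    _ = (Polynomial.evalRingHom x).mapMatrix q := by rw [hadj]
    _ = ∑ i ∈ range (n + 1), p.coeff i • ∑ j ∈ range i, x ^ j • A ^ (i - 1 - j) := by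
        rw [hq, map_sum]
        refine Finset.sum_congr rfl fun i _ => ?_
        rw [mapMatrix_smul']
        simp only [coe_evalRingHom, eval_C]
        congr 1
        rw [map_sum]
        refine Finset.sum_congr rfl fun j _ => ?_
        rw [_root_.map_mul, _root_.map_pow, _root_.map_pow, hBmap, hSmap, _root_.smul_pow, one_pow,
          smul_mul_assoc, one_mul]


private lemma comb_lemma (n : ℕ) (t e c : ℕ → ℂ) (x : ℂ)
    (hc : ∀ i, i ≤ n → c i = (-1) ^ (n - i) * e (n - i)) (ht0 : t 0 = 0) :
    ∑ i ∈ range (n + 1), ∑ j ∈ range i, c i * (x ^ j * t (i - 1 - j)) =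
      ∑ j ∈ Finset.Icc 1 (n - 1), ∑ k ∈ range (n - j),
        t j * x ^ (n - 1 - j - k) * (-1) ^ k * e k := by
  have h1 : ∀ i ∈ range (n + 1), ∑ j ∈ range i, c i * (x ^ j * t (i - 1 - j))
      = ∑ j ∈ range i, c i * (x ^ (i - 1 - j) * t j) := by
    intro i _
    rw [← Finset.sum_range_reflect (fun j => c i * (x ^ (i - 1 - j) * t j)) i]
    refine Finset.sum_congr rfl fun j hj => ?_
    rw [Finset.mem_range] at hj
    have hjj : i - 1 - (i - 1 - j) = j := by omega
    rw [hjj]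
  rw [Finset.sum_congr rfl h1]
  have h2 : ∀ i ∈ range (n + 1), ∑ j ∈ range i, c i * (x ^ (i - 1 - j) * t j)
      = ∑ j ∈ range (n + 1), if j < i then c i * (x ^ (i - 1 - j) * t j) else 0 := by
    intro i hi
    rw [Finset.mem_range] at hi
    rw [← Finset.sum_subset (Finset.range_subset_range.mpr (by omega : i ≤ n + 1))
      (fun j _ hj => by rw [if_neg]; rw [Finset.mem_range] at hj; omega)]
    exact Finset.sum_congr rfl fun j hj => (if_pos (Finset.mem_range.mp hj)).symm
  rw [Finset.sum_congr rfl h2, Finset.sum_comm]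
  have h3 : ∀ j ∈ range (n + 1),
      (∑ i ∈ range (n + 1), if j < i then c i * (x ^ (i - 1 - j) * t j) else 0)
      = ∑ k ∈ range (n - j), t j * x ^ (n - 1 - j - k) * (-1) ^ k * e k := by
    intro j hj
    rw [Finset.mem_range] at hj
    rw [← Finset.sum_range_reflect (fun i => if j < i then c i * (x ^ (i - 1 - j) * t j) else 0)
      (n + 1)]
    have hz : ∀ k ∈ range (n + 1), k ∉ range (n - j) →
        (fun i => if j < i then c i * (x ^ (i - 1 - j) * t j) else 0) (n + 1 - 1 - k) = 0 := by
      intro k hk hk'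
      rw [Finset.mem_range] at hk hk'
      show (if j < n + 1 - 1 - k then c (n + 1 - 1 - k) * (x ^ (n + 1 - 1 - k - 1 - j) * t j) else 0) = 0
      rw [if_neg (by omega)]
    rw [← Finset.sum_subset (Finset.range_subset_range.mpr (by omega : n - j ≤ n + 1)) hz]
    · refine Finset.sum_congr rfl fun k hk => ?_
      rw [Finset.mem_range] at hk
      show (if j < n + 1 - 1 - k then c (n + 1 - 1 - k) * (x ^ (n + 1 - 1 - k - 1 - j) * t j) else 0) = _
      rw [if_pos (by omega : j < n + 1 - 1 - k)]
      have e1 : n + 1 - 1 - k = n - k := by omega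
      rw [e1, hc (n - k) (by omega)]
      have e2 : n - (n - k) = k := by omega
      have e3 : n - k - 1 - j = n - 1 - j - k := by omega
      rw [e2, e3]
      ring
  rw [Finset.sum_congr rfl h3]
  have hsub : Finset.Icc 1 (n - 1) ⊆ range (n + 1) := by
    intro j hj
    rw [Finset.mem_Icc] at hj
    rw [Finset.mem_range]
    omega
  have hz2 : ∀ j ∈ range (n + 1), j ∉ Finset.Icc 1 (n - 1) →
      (∑ k ∈ range (n - j), t j * x ^ (n - 1 - j - k) * (-1) ^ k * e k) = 0 := by
    intro j hjr hjI
    rw [Finset.mem_range] at hjr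
    rw [Finset.mem_Icc] at hjI
    push_neg at hjI
    rcases Nat.eq_zero_or_pos j with rfl | hj1
    · simp [ht0]
    · have : n - j = 0 := by omega
      rw [this]
      simp
  rw [← Finset.sum_subset hsub hz2]

/-- Explicit form of the secondary-value equation: for an upper triangular `A ∈ ℂ^{n×n}` with
diagonal (eigenvalues) `λᵢ = A i i`, with `tⱼ(A) := tr(Aʲ·Aᴴ) − Σᵢ λᵢʲ·conj(λᵢ)` and `eₖ` the
elementary symmetric polynomials of the eigenvalues, for every `x ∈ ℂ`:
`tr(adj(xI − A)·Aᴴ) − Σⱼ conj(λⱼ)·∏_{i≠j}(x − λᵢ)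
  = Σ_{j=1}^{n−1} Σ_{k=0}^{n−1−j} tⱼ·x^{n−1−j−k}·(−1)ᵏ·eₖ`. -/
theorem secondary_value_equation_explicit (n : ℕ)
    (A : Matrix (Fin n) (Fin n) ℂ) (hA : A.BlockTriangular id)
    (t : ℕ → ℂ)
    (ht : ∀ j, t j = Matrix.trace (A ^ j * Aᴴ) - ∑ i, (A i i) ^ j * conj (A i i))
    (e : ℕ → ℂ)
    (he : ∀ k, e k = ∑ s ∈ Finset.powersetCard k (Finset.univ : Finset (Fin n)),
      ∏ i ∈ s, A i i) :
    ∀ x : ℂ,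
      Matrix.trace ((x • (1 : Matrix (Fin n) (Fin n) ℂ) - A).adjugate * Aᴴ) -
          ∑ j, conj (A j j) * ∏ i ∈ Finset.univ.erase j, (x - A i i) =
        ∑ j ∈ Finset.Icc 1 (n - 1), ∑ k ∈ Finset.range (n - j),
          t j * x ^ (n - 1 - j - k) * (-1) ^ k * e k := by
  intro x
  classical
  set D : Matrix (Fin n) (Fin n) ℂ := Matrix.diagonal (fun i => A i i) with hDdef
  have hD : D.BlockTriangular id := Matrix.blockTriangular_diagonal _
  have ht0 : t 0 = 0 := by
    rw [ht 0, pow_zero, one_mul, Matrix.trace_conjTranspose]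
    simp only [Matrix.trace, Matrix.diag_apply, star_sum, starRingEnd_apply, pow_zero, one_mul]
    exact sub_self _
  have hcoeff : ∀ i, i ≤ n →
      (∏ l, (X - C (A l l)) : ℂ[X]).coeff i = (-1) ^ (n - i) * e (n - i) := by
    intro i hi
    have hcard : Multiset.card ((Finset.univ : Finset (Fin n)).val.map fun l => A l l) = n := by
      simp
    have h1 : (∏ l, (X - C (A l l)) : ℂ[X])
        = ((((Finset.univ : Finset (Fin n)).val.map fun l => A l l).map
            fun r => X - C r)).prod := by
      rw [Multiset.map_map]
      rfl
    rw [h1, Multiset.prod_X_sub_C_coeff _ (by rw [hcard]; omega), hcard,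
      Finset.esymm_map_val, he]
  have hterm2 : (∑ j, conj (A j j) * ∏ i ∈ Finset.univ.erase j, (x - A i i))
      = Matrix.trace ((x • (1 : Matrix (Fin n) (Fin n) ℂ) - D).adjugate * Dᴴ) := by
    have hxD : x • (1 : Matrix (Fin n) (Fin n) ℂ) - D
        = Matrix.diagonal (fun i => x - A i i) := by
      ext i j
      by_cases h : i = j <;> simp [hDdef, Matrix.one_apply, Matrix.diagonal_apply, h]
    rw [hxD, Matrix.adjugate_diagonal, hDdef, Matrix.diagonal_conjTranspose,
      Matrix.diagonal_mul_diagonal, Matrix.trace_diagonal]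
    refine Finset.sum_congr rfl fun j _ => ?_
    simp only [Pi.mul_apply, Pi.star_apply, starRingEnd_apply]
    rw [mul_comm]
  have htrD : ∀ m, Matrix.trace (D ^ m * Dᴴ) = ∑ l, (A l l) ^ m * conj (A l l) := by
    intro m
    rw [hDdef, Matrix.diagonal_pow, Matrix.diagonal_conjTranspose,
      Matrix.diagonal_mul_diagonal, Matrix.trace_diagonal]
    refine Finset.sum_congr rfl fun l _ => ?_
    simp only [Pi.mul_apply, Pi.pow_apply, Pi.star_apply, starRingEnd_apply]
  have htrace : ∀ (N K : Matrix (Fin n) (Fin n) ℂ),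
      Matrix.trace ((∑ i ∈ range (n + 1), (∏ l, (X - C (A l l)) : ℂ[X]).coeff i •
          ∑ j ∈ range i, x ^ j • N ^ (i - 1 - j)) * K)
      = ∑ i ∈ range (n + 1), ∑ j ∈ range i,
          (∏ l, (X - C (A l l)) : ℂ[X]).coeff i * (x ^ j * Matrix.trace (N ^ (i - 1 - j) * K)) := by
    intro N K
    rw [Finset.sum_mul, Matrix.trace_sum]
    refine Finset.sum_congr rfl fun i _ => ?_
    rw [smul_mul_assoc, Matrix.trace_smul, Finset.sum_mul, Matrix.trace_sum, smul_eq_mul,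
      Finset.mul_sum]
    refine Finset.sum_congr rfl fun j _ => ?_
    rw [smul_mul_assoc, Matrix.trace_smul, smul_eq_mul]
  have hAdjA := adj_formula A hA x
  have hAdjD := adj_formula D hD x
  rw [show (∏ l, (X - C (D l l)) : ℂ[X]) = ∏ l, (X - C (A l l)) from
    Finset.prod_congr rfl fun l _ => by rw [hDdef, Matrix.diagonal_apply_eq]] at hAdjD
  rw [hterm2, hAdjA, hAdjD, htrace A Aᴴ, htrace D Dᴴ, ← Finset.sum_sub_distrib]
  have hstep : ∀ i ∈ range (n + 1),
      ((∑ j ∈ range i, (∏ l, (X - C (A l l)) : ℂ[X]).coeff i *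
          (x ^ j * Matrix.trace (A ^ (i - 1 - j) * Aᴴ)))
        - ∑ j ∈ range i, (∏ l, (X - C (A l l)) : ℂ[X]).coeff i *
          (x ^ j * Matrix.trace (D ^ (i - 1 - j) * Dᴴ)))
      = ∑ j ∈ range i, (∏ l, (X - C (A l l)) : ℂ[X]).coeff i * (x ^ j * t (i - 1 - j)) := by
    intro i _
    rw [← Finset.sum_sub_distrib]
    refine Finset.sum_congr rfl fun j _ => ?_
    rw [htrD, ht]
    ring
  rw [Finset.sum_congr rfl hstep]
  exact comb_lemma n t e (fun i => (∏ l, (X - C (A l l)) : ℂ[X]).coeff i) x hcoeff ht0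
end

section
/- (Two-term coval description for 3×3 matrices) Let A be the 3×3 upper triangular complex matrix with diagonal entries λ₁, λ₂, λ₃ and strictly upper entries b₁ = A₁₂, b₂ = A₁₃, c₁ = A₂₃. Set t₁ := |b₁|² + |b₂|² + |c₁|², assume t₁ ≠ 0, set t₂ := |b₁|²(λ₁+λ₂) + |b₂|²(λ₁+λ₃) + |c₁|²(λ₂+λ₃) + conj(b₂)·b₁·c₁, and define the secondary value χ := (λ₁+λ₂+λ₃) − t₂/t₁. Then for all real numbers p and θ: det(p·I + Im(e^{-iθ}A)) = (p + Im(e^{-iθ}λ₁))·(p + Im(e^{-iθ}λ₂))·(p + Im(e^{-iθ}λ₃)) − (t₁/4)·(p + Im(e^{-iθ}χ)). -/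
/-!
With `ω = e^{-iθ}`, the matrix `p·I + Im(ωA)` is Hermitian with diagonal entries the pedal
coordinates `p(λⱼ)` and strictly upper entries `ωb₁/2i, ωb₂/2i, ωc₁/2i`. Expanding its
determinant, the off-diagonal moduli contribute `-(|c₁|² p(λ₁) + |b₂|² p(λ₂) + |b₁|² p(λ₃))/4`
and the triple product contributes `Im(ω·conj(b₂) b₁ c₁)/4`. Since `t₁ χ` is exactly
`|c₁|² λ₁ + |b₂|² λ₂ + |b₁|² λ₃ - conj(b₂) b₁ c₁`, the two corrections together equal
`-(t₁/4)·p(χ)`.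
-/

open Matrix Complex ComplexConjugate

namespace Coval

lemma det_hermitian_fin_three (d₁ d₂ d₃ : ℝ) (u v w : ℂ) :
    !![(d₁ : ℂ), u, v; conj u, d₂, w; conj v, conj w, d₃].det =
      ((d₁ * d₂ * d₃ - d₁ * ‖w‖ ^ 2 - d₂ * ‖v‖ ^ 2 - d₃ * ‖u‖ ^ 2
        + 2 * (u * w * conj v).re : ℝ) : ℂ) := by
  push_cast
  rw [det_fin_three, re_eq_add_conj]
  simp only [of_apply, cons_val', cons_val_zero, cons_val_fin_one, cons_val_one, cons_val,
    ← mul_conj', map_mul, conj_conj]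
  ring

lemma inv_two_I_mul_sub_conj (z : ℂ) : (2 * I)⁻¹ * (z - conj z) = z.im := by
  rw [sub_conj]
  field_simp
  push_cast
  ring

lemma inv_two_I_mul_neg_conj (z : ℂ) : (2 * I)⁻¹ * (0 - conj z) = conj ((2 * I)⁻¹ * z) := by
  simp only [map_mul, map_inv₀, map_ofNat, conj_I]
  field_simp
  ring

lemma smul_one_add_imPart_upperTriangular (p : ℝ) (ω lam₁ lam₂ lam₃ b₁ b₂ c₁ : ℂ) :
    let A : Matrix (Fin 3) (Fin 3) ℂ := !![lam₁, b₁, b₂; 0, lam₂, c₁; 0, 0, lam₃]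
    let u := (2 * I)⁻¹ * (ω * b₁)
    let v := (2 * I)⁻¹ * (ω * b₂)
    let w := (2 * I)⁻¹ * (ω * c₁)
    (p : ℂ) • (1 : Matrix (Fin 3) (Fin 3) ℂ) + (2 * I)⁻¹ • (ω • A - (ω • A)ᴴ) =
      !![((p + (ω * lam₁).im : ℝ) : ℂ), u, v;
         conj u, ((p + (ω * lam₂).im : ℝ) : ℂ), w;
         conj v, conj w, ((p + (ω * lam₃).im : ℝ) : ℂ)] := by
  ext i j
  simp only [Matrix.add_apply, Matrix.smul_apply, Matrix.sub_apply, conjTranspose_apply,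
    one_apply, star_def, smul_eq_mul]
  fin_cases i <;> fin_cases j <;>
    simp only [Fin.zero_eta, Fin.mk_one, Fin.reduceFinMk, of_apply, cons_val', cons_val_zero,
      cons_val_one, cons_val, cons_val_fin_one, Fin.isValue, ite_true, ite_false,
      mul_zero, mul_one, zero_add, map_zero, ofReal_add, inv_two_I_mul_sub_conj,
      inv_two_I_mul_neg_conj, Fin.reduceEq, sub_zero]

lemma norm_inv_two_I_mul_sq {ω : ℂ} (hω : ‖ω‖ = 1) (b : ℂ) :
    ‖(2 * I)⁻¹ * (ω * b)‖ ^ 2 = ‖b‖ ^ 2 / 4 := by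
  rw [norm_mul, norm_mul, hω, norm_inv, norm_mul, norm_I]
  norm_num
  ring

lemma two_mul_re_triple {ω : ℂ} (hω : ‖ω‖ = 1) (b₁ b₂ c₁ : ℂ) :
    2 * ((2 * I)⁻¹ * (ω * b₁) * ((2 * I)⁻¹ * (ω * c₁)) * conj ((2 * I)⁻¹ * (ω * b₂))).re =
      (ω * (conj b₂ * b₁ * c₁)).im / 4 := by
  have hωω : ω * conj ω = 1 := by rw [mul_conj', hω]; simp
  have : (2 * I)⁻¹ * (ω * b₁) * ((2 * I)⁻¹ * (ω * c₁)) * conj ((2 * I)⁻¹ * (ω * b₂)) =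
      -I / 8 * (ω * (conj b₂ * b₁ * c₁)) := by
    simp only [map_mul, map_inv₀, map_ofNat, conj_I]
    field_simp
    linear_combination (-8 * ω * b₁ * c₁ * conj b₂) * hωω +
      (8 * (I ^ 2 - 1) * ω * b₁ * c₁ * conj b₂) * I_sq
  rw [this]
  simp only [mul_re, div_ofNat_re, neg_re, I_re, neg_zero, zero_div, zero_mul, div_ofNat_im,
    neg_im, I_im, zero_sub, mul_neg]
  ring

lemma mul_pedal_secondary {lam₁ lam₂ lam₃ b₁ b₂ c₁ : ℂ} {t₁ : ℝ}
    (ht₁ : t₁ = ‖b₁‖ ^ 2 + ‖b₂‖ ^ 2 + ‖c₁‖ ^ 2) (ht₁ne : t₁ ≠ 0) {t₂ : ℂ}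
    (ht₂ : t₂ = (‖b₁‖ ^ 2 : ℝ) * (lam₁ + lam₂) + (‖b₂‖ ^ 2 : ℝ) * (lam₁ + lam₃) +
      (‖c₁‖ ^ 2 : ℝ) * (lam₂ + lam₃) + conj b₂ * b₁ * c₁)
    {χ : ℂ} (hχ : χ = lam₁ + lam₂ + lam₃ - t₂ / (t₁ : ℂ)) (p : ℝ) (ω : ℂ) :
    t₁ * (p + (ω * χ).im) =
      ‖c₁‖ ^ 2 * (p + (ω * lam₁).im) + ‖b₂‖ ^ 2 * (p + (ω * lam₂).im) +
        ‖b₁‖ ^ 2 * (p + (ω * lam₃).im) - (ω * (conj b₂ * b₁ * c₁)).im := by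
  have hχ' : (t₁ : ℂ) * χ = (‖c₁‖ ^ 2 : ℝ) * lam₁ + (‖b₂‖ ^ 2 : ℝ) * lam₂ +
      (‖b₁‖ ^ 2 : ℝ) * lam₃ - conj b₂ * b₁ * c₁ := by
    rw [hχ, ht₂, mul_sub, mul_div_cancel₀ _ (ofReal_ne_zero.mpr ht₁ne), ht₁]
    push_cast
    ring
  have him : t₁ * (ω * χ).im = (ω * (t₁ * χ)).im := by
    rw [mul_left_comm, im_ofReal_mul]
  rw [mul_add, him, hχ']
  simp only [mul_add, mul_sub, mul_left_comm ω, im_ofReal_mul, add_im, sub_im, ht₁]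
  ring

end Coval

open Coval

/-- Two-term coval description for 3×3 matrices: for the upper triangular matrix
`A = !![λ₁,b₁,b₂; 0,λ₂,c₁; 0,0,λ₃]` with `t₁ = |b₁|²+|b₂|²+|c₁|² ≠ 0`,
`t₂ = |b₁|²(λ₁+λ₂)+|b₂|²(λ₁+λ₃)+|c₁|²(λ₂+λ₃)+conj(b₂)b₁c₁` and secondary value
`χ = (λ₁+λ₂+λ₃) − t₂/t₁`, for all real `p, θ`:
`det(pI + Im(e^{-iθ}A)) = p(λ₁)p(λ₂)p(λ₃) − (t₁/4)·p(χ)` in pedal coordinates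
`p(a) = p + Im(e^{-iθ}a)`. -/
theorem coval_three_by_three (lam₁ lam₂ lam₃ b₁ b₂ c₁ : ℂ)
    (A : Matrix (Fin 3) (Fin 3) ℂ)
    (hA : A = !![lam₁, b₁, b₂; 0, lam₂, c₁; 0, 0, lam₃])
    (t₁ : ℝ)
    (ht₁ : t₁ = ‖b₁‖ ^ 2 + ‖b₂‖ ^ 2 + ‖c₁‖ ^ 2)
    (ht₁ne : t₁ ≠ 0)
    (t₂ : ℂ)
    (ht₂ : t₂ = (‖b₁‖ ^ 2 : ℝ) * (lam₁ + lam₂) +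
      (‖b₂‖ ^ 2 : ℝ) * (lam₁ + lam₃) +
      (‖c₁‖ ^ 2 : ℝ) * (lam₂ + lam₃) + conj b₂ * b₁ * c₁)
    (χ : ℂ) (hχ : χ = lam₁ + lam₂ + lam₃ - t₂ / (t₁ : ℂ)) :
    ∀ p θ : ℝ,
      ((p : ℂ) • (1 : Matrix (Fin 3) (Fin 3) ℂ) +
          (2 * Complex.I)⁻¹ •
            (Complex.exp (-(θ : ℂ) * Complex.I) • A -
              (Complex.exp (-(θ : ℂ) * Complex.I) • A)ᴴ)).det =
        ((p + (Complex.exp (-(θ : ℂ) * Complex.I) * lam₁).im : ℝ) : ℂ) *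
            ((p + (Complex.exp (-(θ : ℂ) * Complex.I) * lam₂).im : ℝ) : ℂ) *
            ((p + (Complex.exp (-(θ : ℂ) * Complex.I) * lam₃).im : ℝ) : ℂ) -
          ((t₁ / 4 : ℝ) : ℂ) * ((p + (Complex.exp (-(θ : ℂ) * Complex.I) * χ).im : ℝ) : ℂ) := by
  intro p θ
  have hω : ‖exp (-(θ : ℂ) * I)‖ = 1 := by
    rw [show -(θ : ℂ) * I = ((-θ : ℝ) : ℂ) * I by push_cast; ring]
    exact norm_exp_ofReal_mul_I _
  set ω := exp (-(θ : ℂ) * I)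
  have hpedal := mul_pedal_secondary ht₁ ht₁ne ht₂ hχ p ω
  rw [hA, smul_one_add_imPart_upperTriangular, det_hermitian_fin_three,
    norm_inv_two_I_mul_sq hω, norm_inv_two_I_mul_sq hω, norm_inv_two_I_mul_sq hω,
    two_mul_re_triple hω]
  norm_cast
  linear_combination hpedal / 4
end

section
/- (The secondary value of a 3×3 matrix lies in the numerical range) Let A be the 3×3 upper triangular complex matrix with diagonal entries λ₁, λ₂, λ₃ and strictly upper entries b₁ = A₁₂, b₂ = A₁₃, c₁ = A₂₃, and assume t₁ := |b₁|² + |b₂|² + |c₁|² ≠ 0. Set t₂ := |b₁|²(λ₁+λ₂) + |b₂|²(λ₁+λ₃) + |c₁|²(λ₂+λ₃) + conj(b₂)·b₁·c₁ and χ := (λ₁+λ₂+λ₃) − t₂/t₁. Then, with the column vector w := (conj(c₁), −conj(b₂), conj(b₁)) (which is nonzero), χ = (wᴴAw)/(wᴴw); in particular χ ∈ W(A) := { (uᴴAu)/(uᴴu) : u ∈ ℂ³, u ≠ 0 }. -/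
/-!
For upper triangular `A`, the cross terms of `wᴴAw` coming from `b₂` and `c₁` cancel, leaving
`λ₁|c₁|² + λ₂|b₂|² + λ₃|b₁|² − conj(b₂)·b₁·c₁ = (λ₁+λ₂+λ₃)·t₁ − t₂`, while `wᴴw = t₁ ≠ 0`.
-/

open Matrix Complex ComplexConjugate

theorem star_dotProduct_self_eq_sum_norm_sq {n : Type*} [Fintype n] (v : n → ℂ) :
    star v ⬝ᵥ v = ((∑ i, ‖v i‖ ^ 2 : ℝ) : ℂ) := by
  simp only [dotProduct, Pi.star_apply, Complex.star_def, conj_mul']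
  push_cast
  rfl

theorem star_dotProduct_upperTriangular_three_mulVec (l₁ l₂ l₃ b₁ b₂ c₁ x y z : ℂ) :
    star ![x, y, z] ⬝ᵥ !![l₁, b₁, b₂; 0, l₂, c₁; 0, 0, l₃] *ᵥ ![x, y, z] =
      l₁ * ‖x‖ ^ 2 + l₂ * ‖y‖ ^ 2 + l₃ * ‖z‖ ^ 2 +
        conj x * b₁ * y + conj x * b₂ * z + conj y * c₁ * z := by
  simp only [dotProduct, mulVec, Fin.sum_univ_three, Pi.star_apply, Complex.star_def,
    cons_val_zero, cons_val_one, cons_val_two, head_cons, tail_cons, of_apply, ← conj_mul']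
  ring

/-- The secondary value of a 3×3 matrix lies in the numerical range: for the upper triangular
matrix `A = !![λ₁,b₁,b₂; 0,λ₂,c₁; 0,0,λ₃]` with `t₁ = |b₁|²+|b₂|²+|c₁|² ≠ 0` and secondary value
`χ = (λ₁+λ₂+λ₃) − t₂/t₁`, the nonzero vector `w = (conj c₁, −conj b₂, conj b₁)` satisfies
`χ = (wᴴAw)/(wᴴw)`; in particular `χ ∈ W(A)`. -/
theorem secondary_value_in_numerical_range_three (lam₁ lam₂ lam₃ b₁ b₂ c₁ : ℂ)
    (A : Matrix (Fin 3) (Fin 3) ℂ)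
    (hA : A = !![lam₁, b₁, b₂; 0, lam₂, c₁; 0, 0, lam₃])
    (t₁ : ℝ)
    (ht₁ : t₁ = ‖b₁‖ ^ 2 + ‖b₂‖ ^ 2 + ‖c₁‖ ^ 2)
    (ht₁ne : t₁ ≠ 0)
    (t₂ : ℂ)
    (ht₂ : t₂ = (‖b₁‖ ^ 2 : ℝ) * (lam₁ + lam₂) +
      (‖b₂‖ ^ 2 : ℝ) * (lam₁ + lam₃) +
      (‖c₁‖ ^ 2 : ℝ) * (lam₂ + lam₃) + conj b₂ * b₁ * c₁)
    (χ : ℂ) (hχ : χ = lam₁ + lam₂ + lam₃ - t₂ / (t₁ : ℂ))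
    (w : Fin 3 → ℂ) (hw : w = ![conj c₁, -conj b₂, conj b₁]) :
    w ≠ 0 ∧
    χ = (star w ⬝ᵥ A.mulVec w) / (star w ⬝ᵥ w) ∧
    χ ∈ {z : ℂ | ∃ u : Fin 3 → ℂ, u ≠ 0 ∧ z = (star u ⬝ᵥ A.mulVec u) / (star u ⬝ᵥ u)} := by
  have ht₁c : (t₁ : ℂ) ≠ 0 := by exact_mod_cast ht₁ne
  have hnorm : star w ⬝ᵥ w = t₁ := by
    rw [star_dotProduct_self_eq_sum_norm_sq, Fin.sum_univ_three, hw, ht₁]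
    simp only [cons_val_zero, cons_val_one, cons_val_two, head_cons, tail_cons, norm_neg,
      Complex.norm_conj]
    push_cast
    ring
  have hw_ne : w ≠ 0 := fun h => ht₁c (by rw [← hnorm, h, dotProduct_zero])
  have hquad : star w ⬝ᵥ A *ᵥ w = χ * t₁ := by
    rw [hA, hw, star_dotProduct_upperTriangular_three_mulVec, hχ, sub_mul,
      div_mul_cancel₀ _ ht₁c, ht₂, ht₁]
    simp only [Complex.norm_conj, norm_neg, Complex.conj_conj, map_neg]
    push_cast
    ring
  have hχ_eq : χ = star w ⬝ᵥ A *ᵥ w / (star w ⬝ᵥ w) := by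
    rw [hquad, hnorm, mul_div_cancel_right₀ _ ht₁c]
  exact ⟨hw_ne, hχ_eq, w, hw_ne, hχ_eq⟩
end

section
/- (Coval description for 4×4 matrices) Let A ∈ ℂ^{4×4} be upper triangular with diagonal entries (eigenvalues) λ₁, λ₂, λ₃, λ₄. Define t₁ := tr(A·Aᴴ) − Σ|λ_j|², t₂ := tr(A²·Aᴴ) − Σ λ_j²·conj(λ_j), and τ := tr(adj(A)·Aᴴ) − Σ_{j=1}^4 conj(λ_j)·∏_{i≠j} λ_i. Assume t₁ ≠ 0 and let χ₊, χ₋ ∈ ℂ be the two roots of the quadratic t₁·x² − (t₁·(λ₁+λ₂+λ₃+λ₄) − t₂)·x − τ = 0. Then there exists a real number γ₂ such that for all real p and θ: det(p·I + Im(e^{-iθ}A)) = ∏_{j=1}^{4}(p + Im(e^{-iθ}λ_j)) − (t₁/4)·(p + Im(e^{-iθ}χ₊))·(p + Im(e^{-iθ}χ₋)) + γ₂/16. -/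
open Matrix Complex ComplexConjugate

set_option maxHeartbeats 4000000

theorem detfour_aux (M : Matrix (Fin 4) (Fin 4) ℂ) : M.det =
    M 0 0 * (M 1 1 * (M 2 2 * M 3 3 - M 2 3 * M 3 2) - M 1 2 * (M 2 1 * M 3 3 - M 2 3 * M 3 1) + M 1 3 * (M 2 1 * M 3 2 - M 2 2 * M 3 1))
  - M 0 1 * (M 1 0 * (M 2 2 * M 3 3 - M 2 3 * M 3 2) - M 1 2 * (M 2 0 * M 3 3 - M 2 3 * M 3 0) + M 1 3 * (M 2 0 * M 3 2 - M 2 2 * M 3 0))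
  + M 0 2 * (M 1 0 * (M 2 1 * M 3 3 - M 2 3 * M 3 1) - M 1 1 * (M 2 0 * M 3 3 - M 2 3 * M 3 0) + M 1 3 * (M 2 0 * M 3 1 - M 2 1 * M 3 0))
  - M 0 3 * (M 1 0 * (M 2 1 * M 3 2 - M 2 2 * M 3 1) - M 1 1 * (M 2 0 * M 3 2 - M 2 2 * M 3 0) + M 1 2 * (M 2 0 * M 3 1 - M 2 1 * M 3 0)) := by
  rw [show M = Matrix.of ![![M 0 0, M 0 1, M 0 2, M 0 3],![M 1 0, M 1 1, M 1 2, M 1 3],![M 2 0, M 2 1, M 2 2, M 2 3],![M 3 0, M 3 1, M 3 2, M 3 3]] from by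
    ext i j; fin_cases i <;> fin_cases j <;> rfl]
  simp [Matrix.det_succ_row_zero, Fin.sum_univ_succ, Fin.succAbove]
  ring

/-- Coval description for 4×4 matrices: for an upper triangular `A ∈ ℂ^{4×4}` with eigenvalues
`λⱼ = A j j`, `t₁ = tr(A·Aᴴ) − Σ|λⱼ|² ≠ 0`, `t₂ = tr(A²·Aᴴ) − Σλⱼ²conj(λⱼ)`,
`τ = tr(adj(A)·Aᴴ) − Σⱼ conj(λⱼ)·∏_{i≠j}λᵢ`, and `χ₊, χ₋` the two roots of
`t₁x² − (t₁·trA − t₂)x − τ = 0` (the secondary values), there is a real `γ₂` with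
`det(pI + Im(e^{-iθ}A)) = ∏ⱼ p(λⱼ) − (t₁/4)·p(χ₊)p(χ₋) + γ₂/16` for all real `p, θ`. -/
theorem coval_four_by_four (A : Matrix (Fin 4) (Fin 4) ℂ) (hA : A.BlockTriangular id)
    (t₁ t₂ τ : ℂ)
    (ht₁ : t₁ = Matrix.trace (A * Aᴴ) - ∑ i, A i i * conj (A i i))
    (ht₂ : t₂ = Matrix.trace (A ^ 2 * Aᴴ) - ∑ i, (A i i) ^ 2 * conj (A i i))
    (hτ : τ = Matrix.trace (A.adjugate * Aᴴ) -
      ∑ j, conj (A j j) * ∏ i ∈ Finset.univ.erase j, A i i)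
    (ht₁ne : t₁ ≠ 0)
    (χp χm : ℂ)
    (hχ : ∀ x : ℂ, t₁ * x ^ 2 - (t₁ * (∑ i, A i i) - t₂) * x - τ =
      t₁ * (x - χp) * (x - χm)) :
    ∃ γ₂ : ℝ, ∀ p θ : ℝ,
      ((p : ℂ) • (1 : Matrix (Fin 4) (Fin 4) ℂ) +
          (2 * Complex.I)⁻¹ •
            (Complex.exp (-(θ : ℂ) * Complex.I) • A -
              (Complex.exp (-(θ : ℂ) * Complex.I) • A)ᴴ)).det =
        (∏ j, ((p + (Complex.exp (-(θ : ℂ) * Complex.I) * A j j).im : ℝ) : ℂ)) -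
          t₁ / 4 * ((p + (Complex.exp (-(θ : ℂ) * Complex.I) * χp).im : ℝ) : ℂ) *
            ((p + (Complex.exp (-(θ : ℂ) * Complex.I) * χm).im : ℝ) : ℂ) +
          ((γ₂ / 16 : ℝ) : ℂ) := by
  have h10 : A 1 0 = 0 := hA (by decide)
  have h20 : A 2 0 = 0 := hA (by decide)
  have h21 : A 2 1 = 0 := hA (by decide)
  have h30 : A 3 0 = 0 := hA (by decide)
  have h31 : A 3 1 = 0 := hA (by decide)
  have h32 : A 3 2 = 0 := hA (by decide)
  -- explicit adjugate entries
  have hadj00 : A.adjugate 0 0 = A 1 1*A 2 2*A 3 3 := by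
    rw [Matrix.adjugate_apply, detfour_aux]
    simp [Matrix.updateRow_apply, Pi.single_apply, h10, h20, h21, h30, h31, h32]; ring
  have hadj01 : A.adjugate 0 1 = -A 0 1*A 2 2*A 3 3 := by
    rw [Matrix.adjugate_apply, detfour_aux]
    simp [Matrix.updateRow_apply, Pi.single_apply, h10, h20, h21, h30, h31, h32]; ring
  have hadj02 : A.adjugate 0 2 = A 0 1*A 1 2*A 3 3-A 0 2*A 1 1*A 3 3 := by
    rw [Matrix.adjugate_apply, detfour_aux]
    simp [Matrix.updateRow_apply, Pi.single_apply, h10, h20, h21, h30, h31, h32]; ring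
  have hadj03 : A.adjugate 0 3 = -A 0 1*A 1 2*A 2 3+A 0 1*A 1 3*A 2 2+A 0 2*A 1 1*A 2 3-A 0 3*A 1 1*A 2 2 := by
    rw [Matrix.adjugate_apply, detfour_aux]
    simp [Matrix.updateRow_apply, Pi.single_apply, h10, h20, h21, h30, h31, h32]; ring
  have hadj11 : A.adjugate 1 1 = A 0 0*A 2 2*A 3 3 := by
    rw [Matrix.adjugate_apply, detfour_aux]
    simp [Matrix.updateRow_apply, Pi.single_apply, h10, h20, h21, h30, h31, h32]; ring
  have hadj12 : A.adjugate 1 2 = -A 0 0*A 1 2*A 3 3 := by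
    rw [Matrix.adjugate_apply, detfour_aux]
    simp [Matrix.updateRow_apply, Pi.single_apply, h10, h20, h21, h30, h31, h32]; ring
  have hadj13 : A.adjugate 1 3 = A 0 0*A 1 2*A 2 3-A 0 0*A 1 3*A 2 2 := by
    rw [Matrix.adjugate_apply, detfour_aux]
    simp [Matrix.updateRow_apply, Pi.single_apply, h10, h20, h21, h30, h31, h32]; ring
  have hadj22 : A.adjugate 2 2 = A 0 0*A 1 1*A 3 3 := by
    rw [Matrix.adjugate_apply, detfour_aux]
    simp [Matrix.updateRow_apply, Pi.single_apply, h10, h20, h21, h30, h31, h32]; ring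
  have hadj23 : A.adjugate 2 3 = -A 0 0*A 1 1*A 2 3 := by
    rw [Matrix.adjugate_apply, detfour_aux]
    simp [Matrix.updateRow_apply, Pi.single_apply, h10, h20, h21, h30, h31, h32]; ring
  have hadj33 : A.adjugate 3 3 = A 0 0*A 1 1*A 2 2 := by
    rw [Matrix.adjugate_apply, detfour_aux]
    simp [Matrix.updateRow_apply, Pi.single_apply, h10, h20, h21, h30, h31, h32]; ring
  have he0 : ∏ i ∈ Finset.univ.erase (0:Fin 4), A i i = A 1 1 * (A 2 2 * A 3 3) := by
    rw [show Finset.univ.erase (0:Fin 4) = {1,2,3} from by decide,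
      Finset.prod_insert (by decide), Finset.prod_insert (by decide), Finset.prod_singleton]
  have he1 : ∏ i ∈ Finset.univ.erase (1:Fin 4), A i i = A 0 0 * (A 2 2 * A 3 3) := by
    rw [show Finset.univ.erase (1:Fin 4) = {0,2,3} from by decide,
      Finset.prod_insert (by decide), Finset.prod_insert (by decide), Finset.prod_singleton]
  have he2 : ∏ i ∈ Finset.univ.erase (2:Fin 4), A i i = A 0 0 * (A 1 1 * A 3 3) := by
    rw [show Finset.univ.erase (2:Fin 4) = {0,1,3} from by decide,
      Finset.prod_insert (by decide), Finset.prod_insert (by decide), Finset.prod_singleton]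
  have he3 : ∏ i ∈ Finset.univ.erase (3:Fin 4), A i i = A 0 0 * (A 1 1 * A 2 2) := by
    rw [show Finset.univ.erase (3:Fin 4) = {0,1,2} from by decide,
      Finset.prod_insert (by decide), Finset.prod_insert (by decide), Finset.prod_singleton]
  -- scalar forms of the hypotheses
  have ht₁' : t₁ = A 0 1*conj (A 0 1)+A 0 2*conj (A 0 2)+A 0 3*conj (A 0 3)+A 1 2*conj (A 1 2)+A 1 3*conj (A 1 3)+A 2 3*conj (A 2 3) := by
    rw [ht₁]
    simp only [Matrix.trace, Matrix.diag, Matrix.mul_apply, Matrix.conjTranspose_apply,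
      Complex.star_def, Fin.sum_univ_four, h10, h20, h21, h30, h31, h32, map_zero,
      mul_zero, zero_mul, add_zero, zero_add]
    ring
  have ht₂' : t₂ = A 0 0*A 0 1*conj (A 0 1)+A 0 0*A 0 2*conj (A 0 2)+A 0 0*A 0 3*conj (A 0 3)+A 0 1*A 1 1*conj (A 0 1)+A 0 1*A 1 2*conj (A 0 2)+A 0 1*A 1 3*conj (A 0 3)+A 0 2*A 2 2*conj (A 0 2)+A 0 2*A 2 3*conj (A 0 3)+A 0 3*A 3 3*conj (A 0 3)+A 1 1*A 1 2*conj (A 1 2)+A 1 1*A 1 3*conj (A 1 3)+A 1 2*A 2 2*conj (A 1 2)+A 1 2*A 2 3*conj (A 1 3)+A 1 3*A 3 3*conj (A 1 3)+A 2 2*A 2 3*conj (A 2 3)+A 2 3*A 3 3*conj (A 2 3) := by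
    rw [ht₂, pow_two]
    simp only [Matrix.trace, Matrix.diag, Matrix.mul_apply, Matrix.conjTranspose_apply,
      Complex.star_def, Fin.sum_univ_four, h10, h20, h21, h30, h31, h32, map_zero,
      mul_zero, zero_mul, add_zero, zero_add]
    ring
  have hτ' : τ = -A 0 0*A 1 1*A 2 3*conj (A 2 3)+A 0 0*A 1 2*A 2 3*conj (A 1 3)-A 0 0*A 1 2*A 3 3*conj (A 1 2)-A 0 0*A 1 3*A 2 2*conj (A 1 3)-A 0 1*A 1 2*A 2 3*conj (A 0 3)+A 0 1*A 1 2*A 3 3*conj (A 0 2)+A 0 1*A 1 3*A 2 2*conj (A 0 3)-A 0 1*A 2 2*A 3 3*conj (A 0 1)+A 0 2*A 1 1*A 2 3*conj (A 0 3)-A 0 2*A 1 1*A 3 3*conj (A 0 2)-A 0 3*A 1 1*A 2 2*conj (A 0 3) := by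
    rw [hτ]
    simp only [Matrix.trace, Matrix.diag, Matrix.mul_apply, Matrix.conjTranspose_apply,
      Complex.star_def, Fin.sum_univ_four, he0, he1, he2, he3,
      hadj00, hadj01, hadj02, hadj03, hadj11, hadj12, hadj13, hadj22, hadj23, hadj33,
      h10, h20, h21, h30, h31, h32, map_zero, mul_zero, zero_mul, add_zero, zero_add]
    ring
  -- relations defining the secondary values
  have hS : (∑ i, A i i) = A 0 0 + A 1 1 + A 2 2 + A 3 3 := by
    simpa using Fin.sum_univ_four (fun i => A i i)
  have hprod : t₁ * (χp * χm) = -τ := by linear_combination -(hχ 0)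
  have hsum : t₁ * (χp + χm) = t₁ * (A 0 0 + A 1 1 + A 2 2 + A 3 3) - t₂ := by
    have h1 := hχ 1
    have h0 := hχ 0
    rw [hS] at h1
    linear_combination h1 - h0
  have ht₁c : conj t₁ = t₁ := by
    rw [ht₁']
    simp only [map_add, _root_.map_mul, Complex.conj_conj]
    ring
  have hsumc : t₁ * (conj χp + conj χm) = conj (t₁ * (A 0 0 + A 1 1 + A 2 2 + A 3 3) - t₂) := by
    have h := congrArg (starRingEnd ℂ) hsum
    simp only [_root_.map_mul, map_add] at h
    rw [ht₁c] at h
    exact h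
  have hprodc : t₁ * (conj χp * conj χm) = -(conj τ) := by
    have h := congrArg (starRingEnd ℂ) hprod
    simp only [_root_.map_mul, map_neg] at h
    rw [ht₁c] at h
    exact h
  have hQ : ∀ q c d : ℂ, t₁ * ((q + c * χp - d * conj χp) * (q + c * χm - d * conj χm)) =
      t₁ * q^2 + q * c * (t₁ * (A 0 0 + A 1 1 + A 2 2 + A 3 3) - t₂)
        - q * d * conj (t₁ * (A 0 0 + A 1 1 + A 2 2 + A 3 3) - t₂)
        - c^2 * τ - c * d * (t₁ * (χp * conj χm + conj χp * χm)) - d^2 * conj τ := by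
    intro q c d
    linear_combination (q*c)*hsum - (q*d)*hsumc + c^2*hprod + d^2*hprodc
  -- the core determinant identity
  have core : ∀ q c d T : ℂ, c * d = 1 →
      (q • (1 : Matrix (Fin 4) (Fin 4) ℂ) + (c • A - d • Aᴴ)).det
        = (∏ j, (q + c * A j j - d * conj (A j j)))
          + (t₁ * q^2 + q * c * (t₁ * (A 0 0 + A 1 1 + A 2 2 + A 3 3) - t₂)
             - q * d * conj (t₁ * (A 0 0 + A 1 1 + A 2 2 + A 3 3) - t₂)
             - c^2 * τ - c * d * T - d^2 * conj τ)
          + ((A - Aᴴ).det - (∏ j, (A j j - conj (A j j))) + τ + T + conj τ) := by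
    intro q c d T hcd
    rw [detfour_aux, detfour_aux, ht₁', ht₂', hτ']
    simp only [Matrix.add_apply, Matrix.sub_apply, Matrix.smul_apply, Matrix.one_apply,
      Matrix.conjTranspose_apply, smul_eq_mul, Complex.star_def, Fin.prod_univ_four,
      h10, h20, h21, h30, h31, h32, map_zero, mul_zero, zero_mul, add_zero, zero_add, sub_zero,
      map_sub, map_add, _root_.map_mul, map_neg, Complex.conj_conj, Fin.reduceEq, reduceIte,
      if_true, if_false, mul_one, one_mul]
    linear_combination ((T+A 0 0*A 1 1*A 2 3*c*c*conj (A 2 3)-A 0 0*A 1 2*A 2 3*c*c*conj (A 1 3)+A 0 0*A 1 2*A 3 3*c*c*conj (A 1 2)-A 0 0*A 1 2*c*d*conj (A 1 2)*conj (A 3 3)+A 0 0*A 1 2*c*conj (A 1 2)*q-A 0 0*A 1 2*conj (A 1 2)*conj (A 3 3)+A 0 0*A 1 3*A 2 2*c*c*conj (A 1 3)+A 0 0*A 1 3*c*d*conj (A 1 2)*conj (A 2 3)-A 0 0*A 1 3*c*d*conj (A 1 3)*conj (A 2 2)+A 0 0*A 1 3*c*conj (A 1 3)*q+A 0 0*A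 1 3*conj (A 1 2)*conj (A 2 3)-A 0 0*A 1 3*conj (A 1 3)*conj (A 2 2)-A 0 0*A 2 3*c*d*conj (A 1 1)*conj (A 2 3)+A 0 0*A 2 3*c*conj (A 2 3)*q-A 0 0*A 2 3*conj (A 1 1)*conj (A 2 3)+A 0 1*A 1 2*A 2 3*c*c*conj (A 0 3)-A 0 1*A 1 2*A 3 3*c*c*conj (A 0 2)+A 0 1*A 1 2*c*d*conj (A 0 2)*conj (A 3 3)-A 0 1*A 1 2*c*conj (A 0 2)*q+A 0 1*A 1 2*conj (A 0 2)*conj (A 3 3)-A 0 1*A 1 3*A 2 2*c*c*conj (A 0 3)-A 0 1*A 1 3*c*d*conj (A 0 2)*conj (A 2 3)+A 0 1*A 1 3*c*d*conj (A 0 3)*conj (A 2 2)-A 0 1*A 1 3*c*conj (A 0 3)*q-A 0 1*A 1 3*conj (A 0 2)*conj (A 2 3)+A 0 1*A 1 3*conj (A 0 3)*conj (A 2 2)+A 0 1*A 2 2*A 3 3*c*c*conj (A 0 1)-A 0 1*A 2 2*c*d*conj (A 0 1)*conj (A 3 3)+A 0 1*A 2 2*c*conj (A 0 1)*q-A 0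 1*A 2 2*conj (A 0 1)*conj (A 3 3)+A 0 1*A 2 3*c*d*conj (A 0 1)*conj (A 2 3)+A 0 1*A 2 3*conj (A 0 1)*conj (A 2 3)-A 0 1*A 3 3*c*d*conj (A 0 1)*conj (A 2 2)+A 0 1*A 3 3*c*conj (A 0 1)*q-A 0 1*A 3 3*conj (A 0 1)*conj (A 2 2)+A 0 1*d*d*conj (A 0 1)*conj (A 2 2)*conj (A 3 3)-A 0 1*d*conj (A 0 1)*conj (A 2 2)*q-A 0 1*d*conj (A 0 1)*conj (A 3 3)*q+A 0 1*conj (A 0 1)*q*q-A 0 2*A 1 1*A 2 3*c*c*conj (A 0 3)+A 0 2*A 1 1*A 3 3*c*c*conj (A 0 2)-A 0 2*A 1 1*c*d*conj (A 0 2)*conj (A 3 3)+A 0 2*A 1 1*c*conj (A 0 2)*q-A 0 2*A 1 1*conj (A 0 2)*conj (A 3 3)+A 0 2*A 1 3*c*d*conj (A 0 2)*conj (A 1 3)-A 0 2*A 1 3*c*d*conj (A 0 3)*conj (A 1 2)+A 0 2*A 1 3*conj (A 0 2)*conj (A 1 3)-A 0 2*A 1 3*conj (A 0 3)*conj (A 1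 2)-A 0 2*A 2 3*c*d*conj (A 0 1)*conj (A 1 3)+A 0 2*A 2 3*c*d*conj (A 0 3)*conj (A 1 1)-A 0 2*A 2 3*c*conj (A 0 3)*q-A 0 2*A 2 3*conj (A 0 1)*conj (A 1 3)+A 0 2*A 2 3*conj (A 0 3)*conj (A 1 1)+A 0 2*A 3 3*c*d*conj (A 0 1)*conj (A 1 2)-A 0 2*A 3 3*c*d*conj (A 0 2)*conj (A 1 1)+A 0 2*A 3 3*c*conj (A 0 2)*q+A 0 2*A 3 3*conj (A 0 1)*conj (A 1 2)-A 0 2*A 3 3*conj (A 0 2)*conj (A 1 1)-A 0 2*d*d*conj (A 0 1)*conj (A 1 2)*conj (A 3 3)+A 0 2*d*d*conj (A 0 2)*conj (A 1 1)*conj (A 3 3)+A 0 2*d*conj (A 0 1)*conj (A 1 2)*q-A 0 2*d*conj (A 0 2)*conj (A 1 1)*q-A 0 2*d*conj (A 0 2)*conj (A 3 3)*q+A 0 2*conj (A 0 2)*q*q+A 0 3*A 1 1*A 2 2*c*c*conj (A 0 3)+A 0 3*A 1 1*c*d*conj (A 0 2)*conj (A 2 3)-A 0 3*A 1 1*c*d*conj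 (A 0 3)*conj (A 2 2)+A 0 3*A 1 1*c*conj (A 0 3)*q+A 0 3*A 1 1*conj (A 0 2)*conj (A 2 3)-A 0 3*A 1 1*conj (A 0 3)*conj (A 2 2)-A 0 3*A 1 2*c*d*conj (A 0 2)*conj (A 1 3)+A 0 3*A 1 2*c*d*conj (A 0 3)*conj (A 1 2)-A 0 3*A 1 2*conj (A 0 2)*conj (A 1 3)+A 0 3*A 1 2*conj (A 0 3)*conj (A 1 2)+A 0 3*A 2 2*c*d*conj (A 0 1)*conj (A 1 3)-A 0 3*A 2 2*c*d*conj (A 0 3)*conj (A 1 1)+A 0 3*A 2 2*c*conj (A 0 3)*q+A 0 3*A 2 2*conj (A 0 1)*conj (A 1 3)-A 0 3*A 2 2*conj (A 0 3)*conj (A 1 1)+A 0 3*d*d*conj (A 0 1)*conj (A 1 2)*conj (A 2 3)-A 0 3*d*d*conj (A 0 1)*conj (A 1 3)*conj (A 2 2)-A 0 3*d*d*conj (A 0 2)*conj (A 1 1)*conj (A 2 3)+A 0 3*d*d*conj (A 0 3)*conj (A 1 1)*conj (A 2 2)+A 0 3*d*conj (A 0 1)*conj (A 1 3)*q+A 0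 3*d*conj (A 0 2)*conj (A 2 3)*q-A 0 3*d*conj (A 0 3)*conj (A 1 1)*q-A 0 3*d*conj (A 0 3)*conj (A 2 2)*q+A 0 3*conj (A 0 3)*q*q-A 1 1*A 2 3*c*d*conj (A 0 0)*conj (A 2 3)+A 1 1*A 2 3*c*conj (A 2 3)*q-A 1 1*A 2 3*conj (A 0 0)*conj (A 2 3)+A 1 2*A 2 3*c*d*conj (A 0 0)*conj (A 1 3)-A 1 2*A 2 3*c*conj (A 1 3)*q+A 1 2*A 2 3*conj (A 0 0)*conj (A 1 3)-A 1 2*A 3 3*c*d*conj (A 0 0)*conj (A 1 2)+A 1 2*A 3 3*c*conj (A 1 2)*q-A 1 2*A 3 3*conj (A 0 0)*conj (A 1 2)+A 1 2*d*d*conj (A 0 0)*conj (A 1 2)*conj (A 3 3)-A 1 2*d*conj (A 0 0)*conj (A 1 2)*q-A 1 2*d*conj (A 1 2)*conj (A 3 3)*q+A 1 2*conj (A 1 2)*q*q-A 1 3*A 2 2*c*d*conj (A 0 0)*conj (A 1 3)+A 1 3*A 2 2*c*conj (A 1 3)*q-A 1 3*A 2 2*conj (A 0 0)*conj (A 1 3)-A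 1 3*d*d*conj (A 0 0)*conj (A 1 2)*conj (A 2 3)+A 1 3*d*d*conj (A 0 0)*conj (A 1 3)*conj (A 2 2)-A 1 3*d*conj (A 0 0)*conj (A 1 3)*q+A 1 3*d*conj (A 1 2)*conj (A 2 3)*q-A 1 3*d*conj (A 1 3)*conj (A 2 2)*q+A 1 3*conj (A 1 3)*q*q+A 2 3*d*d*conj (A 0 0)*conj (A 1 1)*conj (A 2 3)-A 2 3*d*conj (A 0 0)*conj (A 2 3)*q-A 2 3*d*conj (A 1 1)*conj (A 2 3)*q+A 2 3*conj (A 2 3)*q*q : ℂ)) * hcd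
  -- the constant
  set γc : ℂ := (A - Aᴴ).det - (∏ j, (A j j - conj (A j j))) + τ
      + (t₁ * (χp * conj χm + conj χp * χm)) + conj τ with hγc
  have hdAmAH : conj ((A - Aᴴ).det) = (A - Aᴴ).det := by
    have h1 : ((A - Aᴴ)ᴴ).det = conj ((A - Aᴴ).det) := Matrix.det_conjTranspose _
    have h2 : (A - Aᴴ)ᴴ = (-1 : ℂ) • (A - Aᴴ) := by
      rw [Matrix.conjTranspose_sub, Matrix.conjTranspose_conjTranspose]
      ext i j
      simp
    rw [h2, Matrix.det_smul] at h1
    rw [← h1]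
    norm_num
  have hγconj : conj γc = γc := by
    rw [hγc]
    simp only [map_add, map_sub, _root_.map_mul, Complex.conj_conj, map_prod,
      Fin.prod_univ_four]
    rw [hdAmAH, ht₁c]
    ring
  refine ⟨γc.re, fun p θ => ?_⟩
  have hγre : ((γc.re : ℝ) : ℂ) = γc := Complex.conj_eq_iff_re.mp hγconj
  have hγdiv : ((γc.re / 16 : ℝ) : ℂ) = γc / 16 := by push_cast; rw [hγre]
  set c : ℂ := Complex.exp (-(θ:ℂ) * Complex.I) with hcdef
  have hconjc : conj c = Complex.exp ((θ:ℂ) * Complex.I) := by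
    rw [hcdef, ← Complex.exp_conj]
    congr 1
    simp [Complex.conj_ofReal]
  have hcd : c * conj c = 1 := by
    rw [hconjc, hcdef, ← Complex.exp_add]
    simp
  have hAHs : (c • A)ᴴ = conj c • Aᴴ := by
    rw [Matrix.conjTranspose_smul]
    rfl
  have hIp : (2*Complex.I)⁻¹ * (2*Complex.I*(p:ℂ)) = (p:ℂ) := by
    have := Complex.I_ne_zero
    field_simp
  have hmat : (p : ℂ) • (1 : Matrix (Fin 4) (Fin 4) ℂ) + (2*Complex.I)⁻¹ • (c • A - (c • A)ᴴ)
      = (2*Complex.I)⁻¹ • ((2*Complex.I*(p:ℂ)) • (1 : Matrix (Fin 4) (Fin 4) ℂ)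
          + (c • A - conj c • Aᴴ)) := by
    rw [hAHs, smul_add, smul_smul, hIp]
  have hw2 : ((2*Complex.I)⁻¹)^2 = -(4:ℂ)⁻¹ := by
    rw [inv_pow, mul_pow, Complex.I_sq]
    norm_num
  have hw4 : ((2*Complex.I)⁻¹)^4 = (16:ℂ)⁻¹ := by
    rw [inv_pow, mul_pow, show Complex.I^4 = 1 from by
      rw [show (4:ℕ) = 2*2 from rfl, pow_mul, Complex.I_sq]; norm_num]
    norm_num
  have him : ∀ z : ℂ, ((p + (c * z).im : ℝ) : ℂ)
      = (2*Complex.I)⁻¹ * (2*Complex.I*(p:ℂ) + (c * z - conj c * conj z)) := by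
    intro z
    have h := Complex.sub_conj (c * z)
    rw [_root_.map_mul] at h
    push_cast at h ⊢
    rw [h]
    have := Complex.I_ne_zero
    field_simp
  rw [hmat, Matrix.det_smul, Fintype.card_fin, hw4,
    core (2*Complex.I*(p:ℂ)) c (conj c) (t₁ * (χp * conj χm + conj χp * χm)) hcd,
    Fin.prod_univ_four]
  simp only [Fin.prod_univ_four] at hγc ⊢
  rw [him (A 0 0), him (A 1 1), him (A 2 2), him (A 3 3), him χp, him χm, hγdiv]
  linear_combination (-(16:ℂ)⁻¹) * hQ (2*Complex.I*(p:ℂ)) c (conj c) - (16:ℂ)⁻¹ * hγc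
    - ((2*Complex.I*(p:ℂ) + c * A 0 0 - conj c * conj (A 0 0))*(2*Complex.I*(p:ℂ) + c * A 1 1 - conj c * conj (A 1 1))*(2*Complex.I*(p:ℂ) + c * A 2 2 - conj c * conj (A 2 2))*(2*Complex.I*(p:ℂ) + c * A 3 3 - conj c * conj (A 3 3))) * hw4 + (t₁/4*(2*Complex.I*(p:ℂ) + c * χp - conj c * conj χp)*(2*Complex.I*(p:ℂ) + c * χm - conj c * conj χm)) * hw2
end

section
/- (Decomposable matrices have an eigenvalue among their secondary values) Let n ≥ 3, let D ∈ ℂ^{(n−1)×(n−1)} be upper triangular with diagonal entries d₁, …, d_{n−1}, let λ ∈ ℂ, and let A ∈ ℂ^{n×n} be the block upper triangular matrix with (1,1) entry λ, first row tail equal to bᴴ for a vector b ∈ ℂ^{n−1}, zero first column tail, and lower-right block D. The eigenvalues of A are μ₁ = λ, μ₂ = d₁, …, μ_n = d_{n−1}; let e_k be their elementary symmetric polynomials, t_j(A) := tr(A^j·Aᴴ) − Σ_i μ_i^j·conj(μ_i), and let S_A(x) := Σ_{j=1}^{n−1} Σ_{k=0}^{n−1−j} t_j(A)·x^{n−1−j−k}·(−1)^k·e_k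 be the secondary polynomial of A. If b = 0, then S_A(λ) = 0, i.e. the eigenvalue λ is also a secondary value of A. -/
open Matrix Complex ComplexConjugate

/-- Decomposable matrices have an eigenvalue among their secondary values: let `n = m + 1 ≥ 3`,
let `D ∈ ℂ^{m×m}` be upper triangular, and let `A` be the block upper triangular matrix with
`(1,1)` entry `λ`, first row tail `bᴴ`, zero first column tail and lower-right block `D` (so the
eigenvalues of `A` are its diagonal entries `λ, d₁, …, d_m`). With
`tⱼ(A) = tr(Aʲ·Aᴴ) − Σᵢ μᵢʲ·conj(μᵢ)`, `eₖ` the elementary symmetric polynomials of the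
eigenvalues, and secondary polynomial
`S_A(x) = Σ_{j=1}^{n−1} Σ_{k=0}^{n−1−j} tⱼ·x^{n−1−j−k}·(−1)ᵏ·eₖ`: if `b = 0` then `S_A(λ) = 0`,
i.e. the eigenvalue `λ` is also a secondary value of `A`. -/
theorem decomposable_eigenvalue_is_secondary_value (m : ℕ) (hm : 2 ≤ m)
    (D : Matrix (Fin m) (Fin m) ℂ) (hD : D.BlockTriangular id)
    (lam : ℂ) (b : Fin m → ℂ)
    (A : Matrix (Unit ⊕ Fin m) (Unit ⊕ Fin m) ℂ)
    (hA : A = Matrix.fromBlocks (Matrix.of fun _ _ => lam)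
      (Matrix.of fun _ j => conj (b j)) 0 D)
    (t : ℕ → ℂ)
    (ht : ∀ j, t j = Matrix.trace (A ^ j * Aᴴ) - ∑ i, (A i i) ^ j * conj (A i i))
    (e : ℕ → ℂ)
    (he : ∀ k, e k = ∑ s ∈ Finset.powersetCard k (Finset.univ : Finset (Unit ⊕ Fin m)),
      ∏ i ∈ s, A i i)
    (S : ℂ → ℂ)
    (hS : ∀ x, S x = ∑ j ∈ Finset.Icc 1 m, ∑ k ∈ Finset.range (m + 1 - j),
      t j * x ^ (m - j - k) * (-1) ^ k * e k)
    (hb : b = 0) :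
    S lam = 0 := by
  subst hb
  -- sign helper
  have hs : ∀ k : ℕ, ((-1:ℂ))^k * (-1)^k = 1 := fun k => by
    rw [← pow_add]; exact Even.neg_one_pow ⟨k, rfl⟩
  have hA' : A = Matrix.fromBlocks (Matrix.of fun _ _ => lam) 0 0 D := by
    rw [hA]; ext i j
    cases i <;> cases j <;>
      simp [Matrix.fromBlocks_apply₁₁, Matrix.fromBlocks_apply₁₂,
        Matrix.fromBlocks_apply₂₁, Matrix.fromBlocks_apply₂₂]
  have hdiag1 : A (Sum.inl ()) (Sum.inl ()) = lam := by rw [hA']; rfl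
  have hdiag2 : ∀ i, A (Sum.inr i) (Sum.inr i) = D i i := fun i => by rw [hA']; rfl
  set P : Polynomial ℂ := ∏ i : Fin m, (Polynomial.X - Polynomial.C (D i i)) with hP
  set E : ℕ → ℂ := fun k =>
    ∑ s ∈ Finset.powersetCard k (Finset.univ : Finset (Fin m)), ∏ i ∈ s, D i i with hEdef
  -- degree of P
  have hPdeg : P.natDegree = m := by
    rw [hP, Polynomial.natDegree_prod _ _ (fun i _ => Polynomial.X_sub_C_ne_zero _)]
    simp
  -- Vieta for P
  have hcard : Multiset.card ((Finset.univ : Finset (Fin m)).val.map (fun i => D i i)) = m := by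
    simp
  have hcoeff : ∀ k ≤ m, P.coeff (m - k) = (-1)^k * E k := by
    intro k hk
    have h1 : P = (((Finset.univ : Finset (Fin m)).val.map (fun i => D i i)).map
        fun t => Polynomial.X - Polynomial.C t).prod := by
      rw [hP, Finset.prod_eq_multiset_prod, Multiset.map_map]; rfl
    rw [h1, Multiset.prod_X_sub_C_coeff _ (by rw [hcard]; omega), hcard]
    have h2 : m - (m - k) = k := by omega
    rw [h2, Finset.esymm_map_val]
  have hE' : ∀ k ≤ m, E k = (-1)^k * P.coeff (m - k) := by
    intro k hk
    rw [hcoeff k hk, ← mul_assoc, hs, one_mul]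
  -- Cayley-Hamilton
  have hCH : ∀ p q, ∑ j ∈ Finset.range (m+1), P.coeff j * (D^j) p q = 0 := by
    intro p q
    have h0 : (Polynomial.aeval D) P = 0 := by
      rw [hP, ← Matrix.charpoly_of_upperTriangular D hD]
      exact Matrix.aeval_self_charpoly D
    have h1 : ∑ j ∈ Finset.range (m+1), P.coeff j • D^j = 0 := by
      rw [← Polynomial.aeval_eq_sum_range' (n := m+1) (by omega) D]
      exact h0
    have h2 := congrFun (congrFun h1 p) q
    rw [Matrix.sum_apply] at h2
    simpa [Matrix.smul_apply, smul_eq_mul] using h2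
  have hroot : ∀ p, ∑ j ∈ Finset.range (m+1), P.coeff j * (D p p)^j = 0 := by
    intro p
    have h0 : P.eval (D p p) = 0 := by
      rw [hP, Polynomial.eval_prod]
      exact Finset.prod_eq_zero (Finset.mem_univ p) (by simp)
    rw [← Polynomial.eval_eq_sum_range' (n := m+1) (by omega) (D p p)] at *
    exact h0
  -- the full-size polynomial
  set PA : Polynomial ℂ := ∏ i : Unit ⊕ Fin m, (Polynomial.X - Polynomial.C (A i i)) with hPA
  have hPAsplit : PA = (Polynomial.X - Polynomial.C lam) * P := by
    rw [hPA, Fintype.prod_sum_type]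
    congr 1
    · simp [hdiag1]
    · rw [hP]; exact Finset.prod_congr rfl fun i _ => by rw [hdiag2]
  have hcardA : Multiset.card ((Finset.univ : Finset (Unit ⊕ Fin m)).val.map (fun i => A i i))
      = m + 1 := by simp [Fintype.card_sum]; omega
  have hcoeffA : ∀ k ≤ m + 1, PA.coeff (m + 1 - k) = (-1)^k * e k := by
    intro k hk
    have h1 : PA = (((Finset.univ : Finset (Unit ⊕ Fin m)).val.map (fun i => A i i)).map
        fun t => Polynomial.X - Polynomial.C t).prod := by
      rw [hPA, Finset.prod_eq_multiset_prod, Multiset.map_map]; rfl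
    rw [h1, Multiset.prod_X_sub_C_coeff _ (by rw [hcardA]; omega), hcardA]
    have h2 : m + 1 - (m + 1 - k) = k := by omega
    rw [h2, Finset.esymm_map_val, he]
  have he' : ∀ k ≤ m + 1, e k = (-1)^k * PA.coeff (m + 1 - k) := by
    intro k hk
    rw [hcoeffA k hk, ← mul_assoc, hs, one_mul]
  -- relation e (k+1) = E (k+1) + lam * E k
  have erel : ∀ k, k + 1 ≤ m → e (k+1) = E (k+1) + lam * E k := by
    intro k hk
    rw [he' (k+1) (by omega), hPAsplit, hE' (k+1) (by omega), hE' k (by omega)]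
    have h1 : m + 1 - (k+1) = m - k := by omega
    have h2 : m - k = (m - (k+1)) + 1 := by omega
    rw [h1, sub_mul, Polynomial.coeff_sub, h2, Polynomial.coeff_X_mul, ← h2,
      Polynomial.coeff_C_mul]
    ring
  have e0 : e 0 = 1 := by rw [he]; simp
  have E0 : E 0 = 1 := by simp [hEdef]
  -- telescoping
  have tele : ∀ K, K ≤ m - 1 →
      ∑ k ∈ Finset.range (K+1), lam^(K-k) * (-1)^k * e k = (-1)^K * E K := by
    intro K
    induction K with
    | zero => intro _; simpa [e0] using E0.symm
    | succ K ih =>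
      intro hK
      rw [Finset.sum_range_succ]
      have h1 : ∀ k ∈ Finset.range (K+1),
          lam^(K+1-k) * (-1)^k * e k = lam * (lam^(K-k) * (-1)^k * e k) := by
        intro k hk
        rw [Finset.mem_range] at hk
        have h2 : K+1-k = (K-k)+1 := by omega
        rw [h2, pow_succ]; ring
      rw [Finset.sum_congr rfl h1, ← Finset.mul_sum, ih (by omega),
        erel K (by omega), Nat.sub_self, pow_zero]
      ring
  -- rewrite S lam
  have hSval : S lam = ∑ j ∈ Finset.Icc 1 m, t j * P.coeff j := by
    rw [hS]
    refine Finset.sum_congr rfl fun j hj => ?_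
    rw [Finset.mem_Icc] at hj
    have h1 : m + 1 - j = (m - j) + 1 := by omega
    rw [h1]
    have h2 : ∑ k ∈ Finset.range ((m-j)+1), t j * lam ^ (m - j - k) * (-1)^k * e k
        = t j * ∑ k ∈ Finset.range ((m-j)+1), lam ^ (m - j - k) * (-1)^k * e k := by
      rw [Finset.mul_sum]
      exact Finset.sum_congr rfl fun k _ => by ring
    rw [h2, tele (m-j) (by omega), hE' (m-j) (by omega)]
    have h3 : m - (m - j) = j := by omega
    rw [h3, ← mul_assoc ((-1:ℂ)^(m-j)) ((-1:ℂ)^(m-j)) (P.coeff j), hs, one_mul]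
  -- compute t j
  have hApow : ∀ j, A ^ j = Matrix.fromBlocks (Matrix.of fun _ _ => lam ^ j) 0 0 (D ^ j) := by
    intro j
    induction j with
    | zero =>
      rw [pow_zero, pow_zero, ← Matrix.fromBlocks_one]
      congr 1
    | succ j ih =>
      rw [pow_succ, ih, hA', Matrix.fromBlocks_multiply]
      ext i j
      cases i <;> cases j <;>
        simp [Matrix.fromBlocks_apply₁₁, Matrix.fromBlocks_apply₁₂,
          Matrix.fromBlocks_apply₂₁, Matrix.fromBlocks_apply₂₂, Matrix.mul_apply, pow_succ]
  have hAH : Aᴴ = Matrix.fromBlocks (Matrix.of fun _ _ => conj lam) 0 0 Dᴴ := by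
    rw [hA', Matrix.fromBlocks_conjTranspose]
    ext i j
    cases i <;> cases j <;>
      simp [Matrix.fromBlocks_apply₁₁, Matrix.fromBlocks_apply₁₂,
        Matrix.fromBlocks_apply₂₁, Matrix.fromBlocks_apply₂₂, Matrix.conjTranspose_apply]
  have htj : ∀ j, t j = (∑ p, ∑ q, (D^j) p q * conj (D p q))
      - ∑ p, (D p p)^j * conj (D p p) := by
    intro j
    rw [ht j, hApow j, hAH, Matrix.fromBlocks_multiply]
    simp only [Matrix.trace, Matrix.diag_apply, Fintype.sum_sum_type, hdiag1, hdiag2,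
      Matrix.fromBlocks_apply₁₁, Matrix.fromBlocks_apply₂₂, Matrix.add_apply,
      Matrix.mul_apply, Matrix.of_apply, Matrix.zero_apply, Matrix.conjTranspose_apply,
      starRingEnd_apply, Finset.univ_unique, Finset.sum_singleton, zero_mul, mul_zero,
      Finset.sum_const_zero, add_zero, zero_add]
    ring
  rw [hSval]
  have hrange : Finset.range (m+1) = insert 0 (Finset.Icc 1 m) := by
    ext x; simp [Finset.mem_range, Finset.mem_Icc]; omega
  have h0 : (0:ℕ) ∉ Finset.Icc 1 m := by simp
  have key1 : ∀ p q, ∑ j ∈ Finset.Icc 1 m, P.coeff j * (D^j) p q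
      = -(P.coeff 0 * (1 : Matrix (Fin m) (Fin m) ℂ) p q) := by
    intro p q; have h := hCH p q
    rw [hrange, Finset.sum_insert h0, pow_zero] at h
    linear_combination h
  have key2 : ∀ p, ∑ j ∈ Finset.Icc 1 m, P.coeff j * (D p p)^j = -(P.coeff 0) := by
    intro p; have h := hroot p
    rw [hrange, Finset.sum_insert h0, pow_zero, mul_one] at h
    linear_combination h
  calc ∑ j ∈ Finset.Icc 1 m, t j * P.coeff j
      = ∑ j ∈ Finset.Icc 1 m, ((∑ p, ∑ q, (D^j) p q * conj (D p q) * P.coeff j)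
          - ∑ p, (D p p)^j * conj (D p p) * P.coeff j) := by
        refine Finset.sum_congr rfl fun j _ => ?_
        rw [htj j, sub_mul, Finset.sum_mul, Finset.sum_mul]
        congr 1
        exact Finset.sum_congr rfl fun p _ => Finset.sum_mul _ _ _
    _ = (∑ p, ∑ q, ∑ j ∈ Finset.Icc 1 m, (D^j) p q * conj (D p q) * P.coeff j)
        - ∑ p, ∑ j ∈ Finset.Icc 1 m, (D p p)^j * conj (D p p) * P.coeff j := by
        rw [Finset.sum_sub_distrib]
        congr 1
        · rw [Finset.sum_comm]
          exact Finset.sum_congr rfl fun p _ => Finset.sum_comm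
        · rw [Finset.sum_comm]
    _ = (∑ p, ∑ q, conj (D p q) * -(P.coeff 0 * (1 : Matrix (Fin m) (Fin m) ℂ) p q))
        - ∑ p, conj (D p p) * -(P.coeff 0) := by
        congr 1
        · refine Finset.sum_congr rfl fun p _ => Finset.sum_congr rfl fun q _ => ?_
          rw [← key1 p q, Finset.mul_sum]
          exact Finset.sum_congr rfl fun j _ => by ring
        · refine Finset.sum_congr rfl fun p _ => ?_
          rw [← key2 p, Finset.mul_sum]
          exact Finset.sum_congr rfl fun j _ => by ring
    _ = 0 := by
        have hone : ∀ p, ∑ q, conj (D p q) * -(P.coeff 0 * (1 : Matrix (Fin m) (Fin m) ℂ) p q)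
            = -(P.coeff 0 * conj (D p p)) := by
          intro p
          rw [Finset.sum_eq_single p]
          · rw [Matrix.one_apply_eq]; ring
          · intro q _ hq
            rw [Matrix.one_apply_ne (Ne.symm hq)]; ring
          · intro h; exact absurd (Finset.mem_univ p) h
        rw [Finset.sum_congr rfl fun p _ => hone p, sub_eq_zero]
        exact Finset.sum_congr rfl fun p _ => by ring
end

section
/- (A secondary value equal to an eigenvalue outside W(D) forces decomposability) Let n ≥ 3, let D ∈ ℂ^{(n−1)×(n−1)} be upper triangular with diagonal entries d₁, …, d_{n−1}, let λ ∈ ℂ, b ∈ ℂ^{n−1}, and let A ∈ ℂ^{n×n} be the block upper triangular matrix with (1,1) entry λ, first row tail bᴴ, zero first column tail, and lower-right block D. Let S_A be the secondary polynomial of A built from the eigenvalues μ₁ = λ, μ₂ = d₁, …, μ_n = d_{n−1} via S_A(x) := Σ_{j=1}^{n−1} Σ_{k=0}^{n−1−j} t_j(A)·x^{n−1−j−k}·(−1)^k·e_k, with t_j(A) := tr(A^j·Aᴴ) − Σ_i μ_i^j·conj(μ_i) and e_k the elementary symmetric polynomials of the μ_i. If λ ∉ W(D) := { (uᴴDu)/(uᴴu)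 : u ∈ ℂ^{n−1}, u ≠ 0 } and S_A(λ) = 0, then b = 0, i.e. A decomposes into the direct sum of λ and D. -/
open Matrix Complex ComplexConjugate

open Polynomial in
private lemma esymm_eq_coeff' {ι : Type*} {R : Type*} [CommRing R] (s : Finset ι) (f : ι → R)
    (k : ℕ) (hk : k ≤ s.card) :
    ∑ t ∈ Finset.powersetCard k s, ∏ i ∈ t, f i
      = (-1) ^ k * (∏ i ∈ s, (X - C (f i))).coeff (s.card - k) := by
  have hc : Multiset.card (s.val.map f) = s.card := by simp
  have h1 : (∏ i ∈ s, (X - C (f i))) = ((s.val.map f).map (fun t => X - C t)).prod := by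
    rw [Finset.prod_eq_multiset_prod, Multiset.map_map]; rfl
  have hk' : s.card - k ≤ Multiset.card (s.val.map f) := by omega
  rw [h1, Multiset.prod_X_sub_C_coeff _ hk', hc]
  have h2 : s.card - (s.card - k) = k := by omega
  rw [h2, ← mul_assoc, ← pow_add, Even.neg_one_pow ⟨k, rfl⟩, one_mul, Finset.esymm_map_val]

private lemma trace_fromBlocks' {l o α : Type*} [Fintype l] [Fintype o] [AddCommMonoid α]
    (P : Matrix l l α) (Q : Matrix l o α) (R : Matrix o l α) (S : Matrix o o α) :
    (fromBlocks P Q R S).trace = P.trace + S.trace := by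
  simp [Matrix.trace, Fintype.sum_sum_type, fromBlocks]

private lemma pow_formula' (m : ℕ) (lam : ℂ) (b : Fin m → ℂ) (D : Matrix (Fin m) (Fin m) ℂ)
    (j : ℕ) :
    ((fromBlocks (Matrix.of fun _ _ => lam) (Matrix.of fun _ j => conj (b j)) 0 D :
        Matrix (Unit ⊕ Fin m) (Unit ⊕ Fin m) ℂ)) ^ (j + 1)
      = fromBlocks (Matrix.of fun _ _ => lam ^ (j + 1))
          (∑ i ∈ Finset.range (j + 1), lam ^ (j - i) • ((Matrix.of fun _ j => conj (b j)) * D ^ i))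
          0 (D ^ (j + 1)) := by
  set bH : Matrix Unit (Fin m) ℂ := Matrix.of fun _ j => conj (b j) with hbH
  induction j with
  | zero =>
    simp [pow_one]
  | succ j ih =>
    rw [pow_succ', ih, fromBlocks_multiply]
    have h11 : (Matrix.of fun (_:Unit) (_:Unit) => lam) * (Matrix.of fun (_:Unit) (_:Unit) => lam ^ (j+1))
        + bH * (0 : Matrix (Fin m) Unit ℂ)
        = (Matrix.of fun (_ : Unit) (_ : Unit) => lam ^ (j + 1 + 1)) := by
      ext i j'
      simp [Matrix.mul_apply, pow_succ']
    have hl : (Matrix.of fun (_:Unit) (_:Unit) => lam) *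
          (∑ i ∈ Finset.range (j + 1), lam ^ (j - i) • (bH * D ^ i))
          = ∑ i ∈ Finset.range (j + 1), lam ^ (j + 1 - i) • (bH * D ^ i) := by
      rw [Matrix.mul_sum]
      refine Finset.sum_congr rfl fun i hi => ?_
      have hij : j + 1 - i = (j - i) + 1 := by
        have := Finset.mem_range.mp hi; omega
      ext r s
      simp [Matrix.mul_apply, hij, pow_succ]
      ring
    have h12 : (Matrix.of fun (_:Unit) (_:Unit) => lam) *
          (∑ i ∈ Finset.range (j + 1), lam ^ (j - i) • (bH * D ^ i)) + bH * D ^ (j+1)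
        = ∑ i ∈ Finset.range (j + 1 + 1), lam ^ (j + 1 - i) • (bH * D ^ i) := by
      rw [hl, Finset.sum_range_succ (fun i => lam ^ (j + 1 - i) • (bH * D ^ i)) (j+1)]
      simp
    rw [h11, h12]
    simp [← pow_succ']

/-- A secondary value equal to an eigenvalue outside `W(D)` forces decomposability: with `A` the
block upper triangular matrix with `(1,1)` entry `λ`, first row tail `bᴴ`, zero first column
tail and upper triangular lower-right block `D ∈ ℂ^{m×m}` (`m + 1 = n ≥ 3`), and `S_A` the
secondary polynomial of `A` built from its eigenvalues (the diagonal entries): if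
`λ ∉ W(D)` and `S_A(λ) = 0`, then `b = 0`, i.e. `A` decomposes into the direct sum of `λ`
and `D`. -/
theorem secondary_value_eigenvalue_forces_decomposition (m : ℕ) (hm : 2 ≤ m)
    (D : Matrix (Fin m) (Fin m) ℂ) (hD : D.BlockTriangular id)
    (lam : ℂ) (b : Fin m → ℂ)
    (A : Matrix (Unit ⊕ Fin m) (Unit ⊕ Fin m) ℂ)
    (hA : A = Matrix.fromBlocks (Matrix.of fun _ _ => lam)
      (Matrix.of fun _ j => conj (b j)) 0 D)
    (t : ℕ → ℂ)
    (ht : ∀ j, t j = Matrix.trace (A ^ j * Aᴴ) - ∑ i, (A i i) ^ j * conj (A i i))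
    (e : ℕ → ℂ)
    (he : ∀ k, e k = ∑ s ∈ Finset.powersetCard k (Finset.univ : Finset (Unit ⊕ Fin m)),
      ∏ i ∈ s, A i i)
    (S : ℂ → ℂ)
    (hS : ∀ x, S x = ∑ j ∈ Finset.Icc 1 m, ∑ k ∈ Finset.range (m + 1 - j),
      t j * x ^ (m - j - k) * (-1) ^ k * e k)
    (hlam : lam ∉ {z : ℂ | ∃ u : Fin m → ℂ, u ≠ 0 ∧ z = (star u ⬝ᵥ D.mulVec u) / (star u ⬝ᵥ u)})
    (hSlam : S lam = 0) :
    b = 0 := by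
  classical
  set bH : Matrix Unit (Fin m) ℂ := Matrix.of fun _ j => conj (b j) with hbH
  set p : Polynomial ℂ := ∏ i : Fin m, (Polynomial.X - Polynomial.C (D i i)) with hp
  -- basic facts about p
  have hpdeg : p.natDegree = m := by
    rw [hp, Polynomial.natDegree_prod]
    · simp
    · intro i _; exact Polynomial.X_sub_C_ne_zero _
  have hCH : (Polynomial.aeval D) p = 0 := by
    rw [hp, ← Matrix.charpoly_of_upperTriangular D hD]; exact Matrix.aeval_self_charpoly D
  have hpeval : ∀ i, p.eval (D i i) = 0 := by
    intro i
    rw [hp, Polynomial.eval_prod]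
    exact Finset.prod_eq_zero (Finset.mem_univ i) (by simp)
  -- the numerical range hypothesis, reformulated
  have hdot0 : ∀ v : Fin m → ℂ, star v ⬝ᵥ v = 0 → v = 0 := by
    open scoped ComplexOrder in
    exact fun v h => dotProduct_star_self_eq_zero.mp h
  have hW : ∀ v : Fin m → ℂ, v ≠ 0 → star v ⬝ᵥ (D *ᵥ v) ≠ lam * (star v ⬝ᵥ v) := by
    intro v hv hcon
    have hvv : (star v ⬝ᵥ v) ≠ 0 := fun h => hv (hdot0 v h)
    exact hlam ⟨v, hv, by field_simp [hcon]; exact hcon.symm⟩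
  -- lam is not an eigenvalue of D
  have hne : p.eval lam ≠ 0 := by
    intro h
    rw [hp, Polynomial.eval_prod] at h
    obtain ⟨i, -, hi⟩ := Finset.prod_eq_zero_iff.mp h
    simp only [Polynomial.eval_sub, Polynomial.eval_X, Polynomial.eval_C, sub_eq_zero] at hi
    refine hW (Pi.single i 1) (by simp [Pi.single_eq_same, Function.ne_iff]) ?_
    have h1 : star (Pi.single i 1 : Fin m → ℂ) ⬝ᵥ (D *ᵥ Pi.single i 1) = D i i := by
      simp [dotProduct, Matrix.mulVec, Pi.single_apply, apply_ite, Finset.sum_ite_eq', mul_comm]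
    have h2 : star (Pi.single i 1 : Fin m → ℂ) ⬝ᵥ (Pi.single i 1 : Fin m → ℂ) = 1 := by
      simp [dotProduct, Pi.single_apply, apply_ite, Finset.sum_ite_eq']
    rw [h1, h2, mul_one, ← hi]
  -- the e's in terms of coefficients of p
  have hek : ∀ k, k ≤ m → e k = (-1)^k * (p.coeff (m - k) - lam * p.coeff (m - k + 1)) := by
    intro k hk
    have hcard : (Finset.univ : Finset (Unit ⊕ Fin m)).card = m + 1 := by
      simp [Fintype.card_sum]; omega
    have hkc : k ≤ (Finset.univ : Finset (Unit ⊕ Fin m)).card := by omega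
    rw [he k, esymm_eq_coeff' _ _ k hkc, hcard]
    have hprod : (∏ i : Unit ⊕ Fin m, (Polynomial.X - Polynomial.C (A i i)))
        = (Polynomial.X - Polynomial.C lam) * p := by
      rw [Fintype.prod_sum_type, hp, hA]
      simp
    rw [hprod]
    have h : m + 1 - k = (m - k) + 1 := by omega
    rw [h, sub_mul, Polynomial.coeff_sub, Polynomial.coeff_X_mul, Polynomial.coeff_C_mul]
  -- the inner sums
  have hinner : ∀ j, 1 ≤ j → j ≤ m →
      (∑ k ∈ Finset.range (m + 1 - j), lam ^ (m - j - k) * (-1) ^ k * e k) = p.coeff j := by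
    intro j hj1 hj2
    set a := m - j with ha
    have hrange : m + 1 - j = a + 1 := by omega
    set F : ℕ → ℂ := fun i => lam ^ i * p.coeff (j + i) with hF
    have hstep : ∀ k ∈ Finset.range (a + 1),
        lam ^ (a - k) * (-1) ^ k * e k
          = lam ^ (a - k) * (p.coeff (m - k) - lam * p.coeff (m - k + 1)) := by
      intro k hk
      have hk0 := Finset.mem_range.mp hk
      rw [hek k (by omega)]
      have hsq : ((-1:ℂ))^k * (-1)^k = 1 := by
        rw [← pow_add]; exact Even.neg_one_pow ⟨k, rfl⟩
      linear_combination (lam ^ (a - k) * (p.coeff (m - k) - lam * p.coeff (m - k + 1))) * hsq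
    rw [hrange, Finset.sum_congr rfl hstep, ← Finset.sum_range_reflect]
    have hstep2 : ∀ i ∈ Finset.range (a + 1),
        lam ^ (a - (a + 1 - 1 - i)) *
            (p.coeff (m - (a + 1 - 1 - i)) - lam * p.coeff (m - (a + 1 - 1 - i) + 1))
          = F i - F (i + 1) := by
      intro i hi
      have hi0 := Finset.mem_range.mp hi
      have e1 : a + 1 - 1 - i = a - i := by omega
      have e2 : a - (a - i) = i := by omega
      have e3 : m - (a - i) = j + i := by omega
      have e4 : m - (a - i) + 1 = j + (i + 1) := by omega
      simp only [hF, e1, e2, e3, e4]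
      ring
    rw [Finset.sum_congr rfl hstep2, Finset.sum_range_sub' F]
    have hc0 : p.coeff (j + (a + 1)) = 0 := by
      apply Polynomial.coeff_eq_zero_of_natDegree_lt
      omega
    simp [hF, hc0]
  -- rewrite S lam
  have hS2 : ∑ j ∈ Finset.Icc 1 m, t j * p.coeff j = 0 := by
    rw [hS] at hSlam
    rw [← hSlam]
    refine Finset.sum_congr rfl fun j hj => ?_
    obtain ⟨hj1, hj2⟩ := Finset.mem_Icc.mp hj
    rw [← hinner j hj1 hj2, Finset.mul_sum]
    exact Finset.sum_congr rfl fun k hk => by ring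
  -- formula for t j
  have ht' : ∀ j', j' + 1 ≤ m → t (j' + 1)
      = (Matrix.trace (D ^ (j'+1) * Dᴴ) - ∑ i, (D i i) ^ (j'+1) * conj (D i i))
        + Matrix.trace ((∑ i ∈ Finset.range (j'+1), lam ^ (j' - i) • (bH * D ^ i)) * bHᴴ) := by
    intro j' hj'
    rw [ht, hA, pow_formula' m lam b D j']
    rw [fromBlocks_conjTranspose, fromBlocks_multiply, trace_fromBlocks']
    have hdiag : ∑ i : Unit ⊕ Fin m,
        ((fromBlocks (Matrix.of fun _ _ => lam) bH 0 D) i i) ^ (j'+1) *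
          conj ((fromBlocks (Matrix.of fun _ _ => lam) bH 0 D) i i)
        = lam ^ (j'+1) * conj lam + ∑ i, (D i i) ^ (j'+1) * conj (D i i) := by
      rw [Fintype.sum_sum_type]
      simp [fromBlocks]
    rw [hdiag]
    have h11 : Matrix.trace ((Matrix.of fun (_:Unit) (_:Unit) => lam ^ (j'+1)) *
          (Matrix.of fun (_:Unit) (_:Unit) => lam)ᴴ
        + (∑ i ∈ Finset.range (j'+1), lam ^ (j' - i) • (bH * D ^ i)) * bHᴴ)
        = lam ^ (j'+1) * conj lam
          + Matrix.trace ((∑ i ∈ Finset.range (j'+1), lam ^ (j' - i) • (bH * D ^ i)) * bHᴴ) := by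
      rw [Matrix.trace_add]
      congr 1
      simp [Matrix.trace, Matrix.mul_apply]
    rw [h11]
    have h22 : Matrix.trace ((0 : Matrix (Fin m) Unit ℂ) * (0 : Matrix (Fin m) Unit ℂ)ᴴ
        + D ^ (j'+1) * Dᴴ) = Matrix.trace (D ^ (j'+1) * Dᴴ) := by
      simp
    rw [h22]
    ring
  -- key matrix G
  set G : Matrix (Fin m) (Fin m) ℂ :=
    ∑ j ∈ Finset.Icc 1 m, p.coeff j • (∑ i ∈ Finset.range j, lam ^ (j - 1 - i) • D ^ i) with hG
  have hpeel : ∀ f : ℕ → ℂ,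
      ∑ j ∈ Finset.range (m + 1), f j = f 0 + ∑ j ∈ Finset.Icc 1 m, f j := by
    intro f
    rw [Finset.range_eq_Ico, Finset.sum_eq_sum_Ico_succ_bot (Nat.succ_pos m)]
    erw [Finset.Ico_add_one_right_eq_Icc (0 + 1) m]
  have hpeelM : ∀ f : ℕ → Matrix (Fin m) (Fin m) ℂ,
      ∑ j ∈ Finset.range (m + 1), f j = f 0 + ∑ j ∈ Finset.Icc 1 m, f j := by
    intro f
    rw [Finset.range_eq_Ico, Finset.sum_eq_sum_Ico_succ_bot (Nat.succ_pos m)]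
    erw [Finset.Ico_add_one_right_eq_Icc (0 + 1) m]
  have hsum_pow : ∑ j ∈ Finset.Icc 1 m, p.coeff j • D ^ j = -(p.coeff 0) • 1 := by
    have h1 : (Polynomial.aeval D) p = ∑ j ∈ Finset.range (m + 1), p.coeff j • D ^ j := by
      rw [Polynomial.aeval_eq_sum_range' (n := m + 1) (by omega)]
    rw [h1, hpeelM] at hCH
    rw [pow_zero] at hCH
    have h2 : ∑ j ∈ Finset.Icc 1 m, p.coeff j • D ^ j = -(p.coeff 0 • 1) := by
      linear_combination (norm := module) hCH
    rw [h2, neg_smul]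
  -- G * (lam • 1 - D) = p.eval lam • 1
  have hGmul : G * (lam • 1 - D) = Polynomial.eval lam p • (1 : Matrix (Fin m) (Fin m) ℂ) := by
    rw [hG, Finset.sum_mul]
    have hterm : ∀ j ∈ Finset.Icc 1 m,
        (p.coeff j • (∑ i ∈ Finset.range j, lam ^ (j - 1 - i) • D ^ i)) * (lam • 1 - D)
          = p.coeff j • (lam ^ j • (1 : Matrix (Fin m) (Fin m) ℂ) - D ^ j) := by
      intro j hj
      obtain ⟨hj1, hj2⟩ := Finset.mem_Icc.mp hj
      rw [Matrix.smul_mul]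
      congr 1
      rw [Finset.sum_mul]
      set f : ℕ → Matrix (Fin m) (Fin m) ℂ := fun i => lam ^ (j - i) • D ^ i with hf
      have hterm2 : ∀ i ∈ Finset.range j,
          (lam ^ (j - 1 - i) • D ^ i) * (lam • 1 - D) = f i - f (i + 1) := by
        intro i hi
        have hij : i < j := Finset.mem_range.mp hi
        have e1 : j - 1 - i = j - (i + 1) := by omega
        have e2 : j - 1 - i + 1 = j - i := by omega
        simp only [hf]
        rw [Matrix.smul_mul, Matrix.mul_sub, Matrix.mul_smul, Matrix.mul_one,
          ← _root_.pow_succ D i, smul_sub, smul_smul, ← _root_.pow_succ lam, e2]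
        rw [e1]
      rw [Finset.sum_congr rfl hterm2, Finset.sum_range_sub' f]
      have hjj : j - j = 0 := by omega
      have hj0 : j - 0 = j := by omega
      simp only [hf, hjj, hj0, pow_zero, one_smul]
    rw [Finset.sum_congr rfl hterm]
    have hsplit : ∑ j ∈ Finset.Icc 1 m,
          p.coeff j • (lam ^ j • (1 : Matrix (Fin m) (Fin m) ℂ) - D ^ j)
        = (∑ j ∈ Finset.Icc 1 m, p.coeff j * lam ^ j) • (1 : Matrix (Fin m) (Fin m) ℂ)
          - ∑ j ∈ Finset.Icc 1 m, p.coeff j • D ^ j := by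
      rw [Finset.sum_smul, ← Finset.sum_sub_distrib]
      refine Finset.sum_congr rfl fun j hj => ?_
      rw [smul_sub, smul_smul]
    rw [hsplit, hsum_pow]
    have heval : Polynomial.eval lam p
        = p.coeff 0 + ∑ j ∈ Finset.Icc 1 m, p.coeff j * lam ^ j := by
      rw [Polynomial.eval_eq_sum_range' (n := m + 1) (by omega), hpeel]
      simp
    rw [heval]
    module
  -- the tau part vanishes
  have htau : ∑ j ∈ Finset.Icc 1 m,
      (Matrix.trace (D ^ j * Dᴴ) - ∑ i, (D i i) ^ j * conj (D i i)) * p.coeff j = 0 := by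
    have htrDH : Matrix.trace Dᴴ = ∑ i, conj (D i i) := by
      simp [Matrix.trace, Matrix.diag, Matrix.conjTranspose_apply]
    have h1 : ∑ j ∈ Finset.Icc 1 m, Matrix.trace (D ^ j * Dᴴ) * p.coeff j
        = -(p.coeff 0) * ∑ i, conj (D i i) := by
      have hh : ∑ j ∈ Finset.Icc 1 m, Matrix.trace (D ^ j * Dᴴ) * p.coeff j
          = Matrix.trace ((∑ j ∈ Finset.Icc 1 m, p.coeff j • D ^ j) * Dᴴ) := by
        rw [Finset.sum_mul, Matrix.trace_sum]
        refine Finset.sum_congr rfl fun j hj => ?_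
        rw [Matrix.smul_mul, Matrix.trace_smul, smul_eq_mul, mul_comm]
      rw [hh, hsum_pow, Matrix.smul_mul, Matrix.trace_smul, Matrix.one_mul, smul_eq_mul, htrDH]
    have h2 : ∀ i : Fin m, ∑ j ∈ Finset.Icc 1 m, p.coeff j * (D i i) ^ j = -(p.coeff 0) := by
      intro i
      have he' : Polynomial.eval (D i i) p
          = ∑ j ∈ Finset.range (m + 1), p.coeff j * (D i i) ^ j := by
        rw [Polynomial.eval_eq_sum_range' (n := m + 1) (by omega)]
      rw [hpeval i, hpeel] at he'
      rw [pow_zero, mul_one] at he'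
      linear_combination -he'
    have h3 : ∑ j ∈ Finset.Icc 1 m, (∑ i, (D i i) ^ j * conj (D i i)) * p.coeff j
        = -(p.coeff 0) * ∑ i, conj (D i i) := by
      calc ∑ j ∈ Finset.Icc 1 m, (∑ i, (D i i) ^ j * conj (D i i)) * p.coeff j
          = ∑ j ∈ Finset.Icc 1 m, ∑ i, p.coeff j * (D i i) ^ j * conj (D i i) := by
            refine Finset.sum_congr rfl fun j _ => ?_
            rw [Finset.sum_mul]
            exact Finset.sum_congr rfl fun i _ => by ring
        _ = ∑ i, ∑ j ∈ Finset.Icc 1 m, p.coeff j * (D i i) ^ j * conj (D i i) :=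
            Finset.sum_comm
        _ = ∑ i, (∑ j ∈ Finset.Icc 1 m, p.coeff j * (D i i) ^ j) * conj (D i i) := by
            refine Finset.sum_congr rfl fun i _ => ?_
            rw [Finset.sum_mul]
        _ = -(p.coeff 0) * ∑ i, conj (D i i) := by
            rw [Finset.mul_sum]
            exact Finset.sum_congr rfl fun i _ => by rw [h2 i]
    calc ∑ j ∈ Finset.Icc 1 m,
        (Matrix.trace (D ^ j * Dᴴ) - ∑ i, (D i i) ^ j * conj (D i i)) * p.coeff j
        = (∑ j ∈ Finset.Icc 1 m, Matrix.trace (D ^ j * Dᴴ) * p.coeff j)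
          - ∑ j ∈ Finset.Icc 1 m, (∑ i, (D i i) ^ j * conj (D i i)) * p.coeff j := by
          rw [← Finset.sum_sub_distrib]
          exact Finset.sum_congr rfl fun j _ => by ring
      _ = 0 := by rw [h1, h3, sub_self]
  -- the b part
  have hCj : ∀ j : ℕ, (∑ i ∈ Finset.range j, lam ^ (j - 1 - i) • (bH * D ^ i))
      = bH * (∑ i ∈ Finset.range j, lam ^ (j - 1 - i) • D ^ i) := by
    intro j
    rw [Matrix.mul_sum]
    exact Finset.sum_congr rfl fun i _ => (Matrix.mul_smul _ _ _).symm
  have hbpart : ∑ j ∈ Finset.Icc 1 m,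
      Matrix.trace ((∑ i ∈ Finset.range j, lam ^ (j - 1 - i) • (bH * D ^ i)) * bHᴴ) * p.coeff j
      = Matrix.trace (bH * G * bHᴴ) := by
    have hh : ∑ j ∈ Finset.Icc 1 m,
        Matrix.trace ((∑ i ∈ Finset.range j, lam ^ (j - 1 - i) • (bH * D ^ i)) * bHᴴ) * p.coeff j
        = Matrix.trace ((∑ j ∈ Finset.Icc 1 m,
            p.coeff j • (∑ i ∈ Finset.range j, lam ^ (j - 1 - i) • (bH * D ^ i))) * bHᴴ) := by
      rw [Matrix.sum_mul, Matrix.trace_sum]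
      refine Finset.sum_congr rfl fun j hj => ?_
      rw [Matrix.smul_mul, Matrix.trace_smul, smul_eq_mul, mul_comm]
    rw [hh]
    congr 1
    refine congrArg₂ _ ?_ rfl
    rw [hG, Matrix.mul_sum]
    refine Finset.sum_congr rfl fun j hj => ?_
    rw [Matrix.mul_smul, hCj j]
  -- combine everything: the trace expression vanishes
  have hSb : Matrix.trace (bH * G * bHᴴ) = 0 := by
    have hsplit2 : ∑ j ∈ Finset.Icc 1 m, t j * p.coeff j
        = (∑ j ∈ Finset.Icc 1 m,
            (Matrix.trace (D ^ j * Dᴴ) - ∑ i, (D i i) ^ j * conj (D i i)) * p.coeff j)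
          + ∑ j ∈ Finset.Icc 1 m,
            Matrix.trace ((∑ i ∈ Finset.range j, lam ^ (j - 1 - i) • (bH * D ^ i)) * bHᴴ)
              * p.coeff j := by
      rw [← Finset.sum_add_distrib]
      refine Finset.sum_congr rfl fun j hj => ?_
      obtain ⟨hj1, hj2⟩ := Finset.mem_Icc.mp hj
      obtain ⟨j', rfl⟩ : ∃ j', j = j' + 1 := ⟨j - 1, by omega⟩
      rw [ht' j' (by omega)]
      simp only [Nat.add_sub_cancel]
      ring
    rw [hsplit2, htau, hbpart, zero_add] at hS2
    exact hS2
  -- from trace to dot product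
  have hdotzero : star b ⬝ᵥ (G *ᵥ b) = 0 := by
    have htr : Matrix.trace (bH * G * bHᴴ) = ∑ r, (∑ s, conj (b s) * G s r) * b r := by
      simp [Matrix.trace, Matrix.mul_apply, Matrix.conjTranspose_apply, hbH,
        Finset.sum_mul]
    have hdot : star b ⬝ᵥ (G *ᵥ b) = ∑ r, (∑ s, conj (b s) * G s r) * b r := by
      calc star b ⬝ᵥ (G *ᵥ b) = ∑ s, ∑ r, conj (b s) * (G s r * b r) := by
            simp only [dotProduct, Matrix.mulVec, Pi.star_apply, Complex.star_def,
              Finset.mul_sum]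
        _ = ∑ r, ∑ s, conj (b s) * (G s r * b r) := Finset.sum_comm
        _ = ∑ r, (∑ s, conj (b s) * G s r) * b r := by
            refine Finset.sum_congr rfl fun r _ => ?_
            rw [Finset.sum_mul]
            exact Finset.sum_congr rfl fun s _ => by ring
    rw [hdot, ← htr, hSb]
  -- endgame
  set u : Fin m → ℂ := G *ᵥ b with hu
  have hcommDG : Commute D G := by
    rw [hG]
    refine Commute.sum_right _ _ _ fun j hj => ?_
    refine Commute.smul_right ?_ _
    refine Commute.sum_right _ _ _ fun i hi => ?_
    exact Commute.smul_right ((Commute.refl D).pow_right i) _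
  have hcomm : (lam • 1 - D) * G = G * (lam • 1 - D) := by
    have h1 : (lam • (1 : Matrix (Fin m) (Fin m) ℂ)) * G = G * (lam • 1) := by
      rw [Matrix.smul_mul, Matrix.mul_smul, Matrix.one_mul, Matrix.mul_one]
    rw [Matrix.sub_mul, Matrix.mul_sub, h1, hcommDG.eq]
  have hmv : (lam • 1 - D) *ᵥ u = Polynomial.eval lam p • b := by
    rw [hu, Matrix.mulVec_mulVec, hcomm, hGmul, Matrix.smul_mulVec, Matrix.one_mulVec]
  by_cases hu0 : u = 0
  · rw [hu0, Matrix.mulVec_zero] at hmv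
    rcases smul_eq_zero.mp hmv.symm with h | h
    · exact absurd h hne
    · exact h
  · exfalso
    have h2 : star u ⬝ᵥ b = 0 := by
      rw [Matrix.star_dotProduct, hdotzero]
      simp
    have h1 : star u ⬝ᵥ ((lam • 1 - D) *ᵥ u) = 0 := by
      rw [hmv, dotProduct_smul, smul_eq_mul, h2, mul_zero]
    have h3 : star u ⬝ᵥ ((lam • 1 - D) *ᵥ u)
        = lam * (star u ⬝ᵥ u) - star u ⬝ᵥ (D *ᵥ u) := by
      rw [Matrix.sub_mulVec, dotProduct_sub, Matrix.smul_mulVec,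
        Matrix.one_mulVec, dotProduct_smul, smul_eq_mul]
    refine hW u hu0 ?_
    rw [h3] at h1
    linear_combination -h1
end
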